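/- arXiv:1305.6425 — 3 statements merged into one kernel-verified Lean document; each statement's English description precedes it below -/
import Mathlib

section
/- Let β : ℝⁿ×ℝⁿ → ℕ be admissible and tame, let (ū,v̄) ∈ D_n⁺ and let e ∈ ℝⁿ with e ≻ 0 and ū+e ≺ v̄−e. Then the family of multiplicities (μ(ū − s·e, v̄ + t·e)) indexed by real numbers s,t with −1 ≤ s < 1 and −1 < t ≤ 1 has finite support, and β(ū+e, v̄−e) − β(ū−e, v̄−e) − β(ū+e, v̄+e) + β(ū−e, v̄+e) = Σ_{−1≤s<1, −1<t≤1} μ(ū − s·e, v̄ + t·e). -/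
namespace PersistSpace

variable {n : ℕ}

/-- `u ≼ v` : componentwise ≤ -/
def vle (u v : Fin n → ℝ) : Prop := ∀ i, u i ≤ v i

/-- `u ≺ v` : componentwise < -/
def vlt (u v : Fin n → ℝ) : Prop := ∀ i, u i < v i

/-- `D_n⁺ = {(u,v) : u ≺ v}` -/
def Dplus (n : ℕ) : Set ((Fin n → ℝ) × (Fin n → ℝ)) := {p | vlt p.1 p.2}

/-- Monotonicity: non-decreasing in `u`, non-increasing in `v`. -/
def Monot (β : (Fin n → ℝ) × (Fin n → ℝ) → ℕ) : Prop :=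
  (∀ u u' v : Fin n → ℝ, vle u u' → vlt u' v → β (u, v) ≤ β (u', v)) ∧
  (∀ u v v' : Fin n → ℝ, vlt u v → vle v v' → β (u, v') ≤ β (u, v))

/-- Jump Monotonicity. -/
def JumpMonot (β : (Fin n → ℝ) × (Fin n → ℝ) → ℕ) : Prop :=
  ∀ u1 u2 v1 v2 : Fin n → ℝ, vle u1 u2 → vlt u2 v1 → vle v1 v2 →
    (β (u2, v2) : ℤ) - β (u1, v2) ≤ (β (u2, v1) : ℤ) - β (u1, v1)

/-- Right-continuity in each variable separately. -/
def RightCont (β : (Fin n → ℝ) × (Fin n → ℝ) → ℕ) : Prop :=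
  ∀ u v : Fin n → ℝ, vlt u v → ∃ δ > (0:ℝ),
    (∀ u' : Fin n → ℝ, vle u u' → ‖u' - u‖ < δ → β (u', v) = β (u, v)) ∧
    (∀ v' : Fin n → ℝ, vle v v' → ‖v' - v‖ < δ → β (u, v') = β (u, v))

def Admissible (β : (Fin n → ℝ) × (Fin n → ℝ) → ℕ) : Prop :=
  Monot β ∧ JumpMonot β ∧ RightCont β

/-- Tameness: boundedness at infinity and vanishing below. -/
def Tame (β : (Fin n → ℝ) × (Fin n → ℝ) → ℕ) : Prop :=
  ∃ C > (0:ℝ),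
    (∀ u v v' : Fin n → ℝ, vlt u v → vlt u v' → (∀ i, C ≤ v i) → (∀ i, C ≤ v' i) →
      β (u, v) = β (u, v')) ∧
    (∀ u v : Fin n → ℝ, vlt u v → (∀ i, u i ≤ -C) → β (u, v) = 0)

/-- `μ_e(u,v)` -/
def muE (β : (Fin n → ℝ) × (Fin n → ℝ) → ℕ) (e u v : Fin n → ℝ) : ℤ :=
  (β (u + e, v - e) : ℤ) - β (u - e, v - e) - β (u + e, v + e) + β (u - e, v + e)

/-- Multiplicity `μ(u,v)`: infimum of `μ_e(u,v)` over admissible `e`. -/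
noncomputable def mult (β : (Fin n → ℝ) × (Fin n → ℝ) → ℕ) (u v : Fin n → ℝ) : ℤ :=
  sInf {m : ℤ | ∃ e : Fin n → ℝ, vlt 0 e ∧ vlt (u + e) (v - e) ∧ m = muE β e u v}

/-- `μ∞_{e,v}(u)` -/
def muInfE (β : (Fin n → ℝ) × (Fin n → ℝ) → ℕ) (e v u : Fin n → ℝ) : ℤ :=
  (β (u + e, v) : ℤ) - β (u - e, v)

/-- Multiplicity at infinity `μ∞(u)`. -/
noncomputable def multInf (β : (Fin n → ℝ) × (Fin n → ℝ) → ℕ) (u : Fin n → ℝ) : ℤ :=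
  sInf {m : ℤ | ∃ e v : Fin n → ℝ, vlt 0 e ∧ vlt (u + e) v ∧ m = muInfE β e v u}

/-- `u` is a discontinuity point of `β(·,v)` (ℕ discrete). -/
def DiscontAt1 (β : (Fin n → ℝ) × (Fin n → ℝ) → ℕ) (v u : Fin n → ℝ) : Prop :=
  ¬ ContinuousWithinAt (fun u' => β (u', v)) {u' | vlt u' v} u

/-- `v` is a discontinuity point of `β(u,·)` (ℕ discrete). -/
def DiscontAt2 (β : (Fin n → ℝ) × (Fin n → ℝ) → ℕ) (u v : Fin n → ℝ) : Prop :=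
  ¬ ContinuousWithinAt (fun v' => β (u, v')) {v' | vlt u v'} v

/-- `p` is a discontinuity point of `β` restricted to `D_n⁺`. -/
def DiscontPt (β : (Fin n → ℝ) × (Fin n → ℝ) → ℕ) (p : (Fin n → ℝ) × (Fin n → ℝ)) : Prop :=
  ¬ ContinuousWithinAt β (Dplus n) p

/-- `β` and `γ` are `η`-interleaved. -/
def Interleaved (β γ : (Fin n → ℝ) × (Fin n → ℝ) → ℕ) (η : ℝ) : Prop :=
  ∀ u v : Fin n → ℝ, vlt u v →
    β (u - (fun _ => η), v + (fun _ => η)) ≤ γ (u, v) ∧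
    γ (u - (fun _ => η), v + (fun _ => η)) ≤ β (u, v)

/- ===== auxiliary material ===== -/

lemma vle_refl (u : Fin n → ℝ) : vle u u := fun _ => le_rfl

lemma vle_trans {u v w : Fin n → ℝ} (h1 : vle u v) (h2 : vle v w) : vle u w :=
  fun i => le_trans (h1 i) (h2 i)

lemma vle_vlt_trans {u v w : Fin n → ℝ} (h1 : vle u v) (h2 : vlt v w) : vlt u w :=
  fun i => lt_of_le_of_lt (h1 i) (h2 i)

lemma vlt_vle_trans {u v w : Fin n → ℝ} (h1 : vlt u v) (h2 : vle v w) : vlt u w :=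
  fun i => lt_of_lt_of_le (h1 i) (h2 i)

/-- Second difference of `β` over a rectangle. -/
def Dif (β : (Fin n → ℝ) × (Fin n → ℝ) → ℕ) (u1 u2 v1 v2 : Fin n → ℝ) : ℤ :=
  (β (u2, v1) : ℤ) - β (u1, v1) - β (u2, v2) + β (u1, v2)

lemma Dif_nonneg {β : (Fin n → ℝ) × (Fin n → ℝ) → ℕ} (hJ : JumpMonot β)
    {u1 u2 v1 v2 : Fin n → ℝ} (h1 : vle u1 u2) (h2 : vlt u2 v1) (h3 : vle v1 v2) :
    0 ≤ Dif β u1 u2 v1 v2 := by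
  have := hJ u1 u2 v1 v2 h1 h2 h3
  unfold Dif; linarith

lemma Dif_mono {β : (Fin n → ℝ) × (Fin n → ℝ) → ℕ} (hJ : JumpMonot β)
    {u1 u1' u2' u2 v1 v1' v2' v2 : Fin n → ℝ}
    (h01 : vle u1 u1') (h12 : vle u1' u2') (h23 : vle u2' u2) (hm : vlt u2 v1)
    (k01 : vle v1 v1') (k12 : vle v1' v2') (k23 : vle v2' v2) :
    Dif β u1' u2' v1' v2' ≤ Dif β u1 u2 v1 v2 := by
  have e1 : Dif β u1 u2 v1 v2 =
      Dif β u1 u1' v1 v2 + Dif β u1' u2' v1 v2 + Dif β u2' u2 v1 v2 := by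
    unfold Dif; ring
  have e2 : Dif β u1' u2' v1 v2 =
      Dif β u1' u2' v1 v1' + Dif β u1' u2' v1' v2' + Dif β u1' u2' v2' v2 := by
    unfold Dif; ring
  have hvle : vle v1 v2 := vle_trans k01 (vle_trans k12 k23)
  have hu1'v1 : vlt u1' v1 := vle_vlt_trans (vle_trans h12 h23) hm
  have hu2'v1 : vlt u2' v1 := vle_vlt_trans h23 hm
  have hu2'v2' : vlt u2' v2' := vlt_vle_trans hu2'v1 (vle_trans k01 k12)
  have n1 : 0 ≤ Dif β u1 u1' v1 v2 := Dif_nonneg hJ h01 hu1'v1 hvle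
  have n2 : 0 ≤ Dif β u2' u2 v1 v2 := Dif_nonneg hJ h23 hm hvle
  have n3 : 0 ≤ Dif β u1' u2' v1 v1' := Dif_nonneg hJ h12 hu2'v1 k01
  have n4 : 0 ≤ Dif β u1' u2' v2' v2 := Dif_nonneg hJ h12 hu2'v2' k23
  linarith


/-- Real induction on an interval. -/
lemma realInd (h : ℝ → ℤ) (a b : ℝ) (hab : a ≤ b)
    (hl : ∀ x, a < x → x ≤ b → ∃ δ > (0:ℝ), ∀ ε, 0 < ε → ε ≤ δ → a ≤ x - ε → h (x - ε) = h x)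
    (hr : ∀ x, a ≤ x → x < b → ∃ ε > (0:ℝ), x + ε ≤ b ∧ h (x + ε) = h x) :
    h b = h a := by
  set S : Set ℝ := {x | x ∈ Set.Icc a b ∧ h x = h a} with hS
  have haS : a ∈ S := ⟨⟨le_rfl, hab⟩, rfl⟩
  have hne : S.Nonempty := ⟨a, haS⟩
  have hbdd : BddAbove S := ⟨b, fun x hx => hx.1.2⟩
  set z := sSup S with hz
  have hza : a ≤ z := le_csSup hbdd haS
  have hzb : z ≤ b := csSup_le hne (fun x hx => hx.1.2)
  have hzval : h z = h a := by
    rcases eq_or_lt_of_le hza with heq | hlt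
    · rw [← heq]
    · obtain ⟨δ, hδ, hδf⟩ := hl z hlt hzb
      have hlt2 : z - min δ (z - a) < sSup S := by
        have : 0 < min δ (z - a) := lt_min hδ (by linarith)
        simp only [← hz]; linarith
      obtain ⟨x, hxS, hxgt⟩ := exists_lt_of_lt_csSup hne hlt2
      have hxz : x ≤ z := le_csSup hbdd hxS
      rcases eq_or_lt_of_le hxz with heq2 | hlt3
      · rw [← heq2]; exact hxS.2
      · have hε : (0:ℝ) < z - x := by linarith
        have hεδ : z - x ≤ δ := by
          have : z - min δ (z - a) < x := hxgt
          have h1 : min δ (z - a) ≤ δ := min_le_left _ _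
          linarith
        have := hδf (z - x) hε hεδ (by have := hxS.1.1; linarith)
        have hx : z - (z - x) = x := by ring
        rw [hx] at this
        rw [← this, hxS.2]
  have hzbb : z = b := by
    by_contra hne2
    have hzltb : z < b := lt_of_le_of_ne hzb hne2
    obtain ⟨ε, hε, hεb, hεh⟩ := hr z hza hzltb
    have : z + ε ∈ S := ⟨⟨by linarith, hεb⟩, by rw [hεh]; exact hzval⟩
    have := le_csSup hbdd this
    linarith
  rw [← hzbb]; exact hzval

/-- Stabilization of a monotone, bounded-below integer valued function near 0. -/
lemma stab1 (f : ℝ → ℤ) (r : ℝ) (hr : 0 < r)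
    (h0 : ∀ ε, 0 < ε → ε ≤ r → 0 ≤ f ε)
    (hm : ∀ ε ε', 0 < ε → ε ≤ ε' → ε' ≤ r → f ε ≤ f ε') :
    ∃ δ, 0 < δ ∧ δ ≤ r ∧ ∀ ε, 0 < ε → ε ≤ δ → f ε = f δ := by
  have Hinh : ∃ z : ℤ, ∃ ε, 0 < ε ∧ ε ≤ r ∧ f ε = z := ⟨f r, r, hr, le_rfl, rfl⟩
  have Hbdd : ∃ b : ℤ, ∀ z : ℤ, (∃ ε, 0 < ε ∧ ε ≤ r ∧ f ε = z) → b ≤ z := by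
    refine ⟨0, ?_⟩
    rintro z ⟨ε, hε, hεr, rfl⟩
    exact h0 ε hε hεr
  obtain ⟨lb, ⟨ε₀, hε₀, hε₀r, hfε₀⟩, hlb⟩ := Int.exists_least_of_bdd Hbdd Hinh
  refine ⟨ε₀, hε₀, hε₀r, fun ε hε hεδ => ?_⟩
  have h1 : f ε ≤ f ε₀ := hm ε ε₀ hε hεδ hε₀r
  have h2 : lb ≤ f ε := hlb _ ⟨ε, hε, le_trans hεδ hε₀r, rfl⟩
  omega

/-- Two-parameter stabilization. -/
lemma stab2 (g : ℝ → ℝ → ℤ) (r : ℝ) (hr : 0 < r)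
    (h0 : ∀ ε ε', 0 < ε → ε ≤ r → 0 < ε' → ε' ≤ r → 0 ≤ g ε ε')
    (hm1 : ∀ ε₁ ε₂ ε', 0 < ε₁ → ε₁ ≤ ε₂ → ε₂ ≤ r → 0 < ε' → ε' ≤ r → g ε₁ ε' ≤ g ε₂ ε')
    (hm2 : ∀ ε ε₁ ε₂, 0 < ε → ε ≤ r → 0 < ε₁ → ε₁ ≤ ε₂ → ε₂ ≤ r → g ε ε₁ ≤ g ε ε₂) :
    ∃ δ, 0 < δ ∧ δ ≤ r ∧ ∀ ε ε', 0 < ε → ε ≤ δ → 0 < ε' → ε' ≤ δ → g ε ε' = g δ δ := by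
  obtain ⟨δ, hδ, hδr, hst⟩ := stab1 (fun ε => g ε ε) r hr
    (fun ε hε hεr => h0 ε ε hε hεr hε hεr)
    (fun ε ε' hε hεε' hε'r => le_trans
      (hm1 ε ε' ε hε hεε' hε'r hε (le_trans hεε' hε'r))
      (hm2 ε' ε ε' (lt_of_lt_of_le hε hεε') hε'r hε hεε' hε'r))
  refine ⟨δ, hδ, hδr, fun ε ε' hε hεδ hε' hε'δ => ?_⟩
  have hmin : 0 < min ε ε' := lt_min hε hε'
  have hmaxδ : max ε ε' ≤ δ := max_le hεδ hε'δ
  have hlow : g (min ε ε') (min ε ε') ≤ g ε ε' := by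
    refine le_trans (hm1 (min ε ε') ε (min ε ε') hmin (min_le_left _ _)
      (le_trans hεδ hδr) hmin (le_trans (min_le_right _ _) (le_trans hε'δ hδr))) ?_
    exact hm2 ε (min ε ε') ε' hε (le_trans hεδ hδr) hmin (min_le_right _ _)
      (le_trans hε'δ hδr)
  have hhigh : g ε ε' ≤ g (max ε ε') (max ε ε') := by
    refine le_trans (hm1 ε (max ε ε') ε' hε (le_max_left _ _)
      (le_trans hmaxδ hδr) hε' (le_trans hε'δ hδr)) ?_
    exact hm2 (max ε ε') ε' (max ε ε') (lt_of_lt_of_le hε (le_max_left _ _))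
      (le_trans hmaxδ hδr) hε' (le_max_right _ _) (le_trans hmaxδ hδr)
  have h1 := hst (min ε ε') hmin (le_trans (min_le_left _ _) hεδ)
  have h2 := hst (max ε ε') (lt_of_lt_of_le hε (le_max_left _ _)) hmaxδ
  omega


/-- A positive lower bound for a positive function on `Fin n`. -/
lemma posmin {n : ℕ} (f : Fin n → ℝ) (hf : ∀ i, 0 < f i) :
    ∃ c : ℝ, 0 < c ∧ ∀ i, c ≤ f i := by
  rcases isEmpty_or_nonempty (Fin n) with hemp | hne
  · exact ⟨1, one_pos, fun i => (IsEmpty.false i).elim⟩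
  · refine ⟨Finset.univ.inf' Finset.univ_nonempty f, ?_, ?_⟩
    · rw [Finset.lt_inf'_iff]
      exact fun i _ => hf i
    · intro i
      exact Finset.inf'_le _ (Finset.mem_univ i)

lemma finsum_mem_zero' {α M : Type*} [AddCommMonoid M] (S : Set α) (f : α → M)
    (h : ∀ p ∈ S, f p = 0) : (S ∩ Function.support f = ∅) ∧ ∑ᶠ p ∈ S, f p = 0 := by
  have hemp : S ∩ Function.support f = ∅ := by
    ext q
    simp only [Set.mem_inter_iff, Function.mem_support, Set.mem_empty_iff_false, iff_false,
      not_and, not_not]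
    exact h q
  constructor
  · exact hemp
  · rw [finsum_mem_eq_sum_of_inter_support_eq f (t := (∅ : Finset α)) (by simp [hemp])]
    simp

lemma finsum_mem_single' {α M : Type*} [AddCommMonoid M] (S : Set α) (f : α → M) (p₀ : α)
    (hp₀ : p₀ ∈ S) (h : ∀ q ∈ S, q ≠ p₀ → f q = 0) :
    (S ∩ Function.support f ⊆ {p₀}) ∧ ∑ᶠ p ∈ S, f p = f p₀ := by
  have hsub : S ∩ Function.support f ⊆ {p₀} := by
    rintro q ⟨hq, hq2⟩
    rw [Function.mem_support] at hq2
    by_contra hne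
    exact hq2 (h q hq (by simpa using hne))
  refine ⟨hsub, ?_⟩
  rw [finsum_mem_eq_sum_of_inter_support_eq f (t := ({p₀} : Finset α)) ?_]
  · exact Finset.sum_singleton f p₀
  · ext q
    simp only [Set.mem_inter_iff, Function.mem_support, Finset.coe_singleton,
      Set.mem_singleton_iff]
    constructor
    · rintro ⟨hq, hq2⟩
      exact ⟨by by_contra hne; exact hq2 (h q hq hne), hq2⟩
    · rintro ⟨rfl, hq2⟩
      exact ⟨hp₀, hq2⟩


/- ===== scalar reduction ===== -/

variable (β : (Fin n → ℝ) × (Fin n → ℝ) → ℕ) (ub vb e : Fin n → ℝ)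

/-- The scalar slice of `β` along direction `e`. -/
def phi (s t : ℝ) : ℤ := (β (ub - s • e, vb + t • e) : ℤ)

/-- Second difference of `phi` over a scalar box. -/
def MB (a b c d : ℝ) : ℤ :=
  phi β ub vb e a c - phi β ub vb e b c - phi β ub vb e a d + phi β ub vb e b d

lemma ptu (s ε : ℝ) : ub - s • e + ε • e = ub - (s - ε) • e := by
  rw [sub_smul]; abel

lemma ptu' (s ε : ℝ) : ub - s • e - ε • e = ub - (s + ε) • e := by
  rw [add_smul]; abel

lemma ptv (t ε : ℝ) : vb + t • e - ε • e = vb + (t - ε) • e := by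
  rw [sub_smul]; abel

lemma ptv' (t ε : ℝ) : vb + t • e + ε • e = vb + (t + ε) • e := by
  rw [add_smul]; abel

lemma vle_usub (he : vlt 0 e) {x y : ℝ} (h : x ≤ y) : vle (ub - y • e) (ub - x • e) := by
  intro i
  have h0 : (0:ℝ) < e i := by simpa using he i
  simp only [Pi.sub_apply, Pi.smul_apply, smul_eq_mul]
  nlinarith

lemma vle_vadd (he : vlt 0 e) {x y : ℝ} (h : x ≤ y) : vle (vb + x • e) (vb + y • e) := by
  intro i
  have h0 : (0:ℝ) < e i := by simpa using he i
  simp only [Pi.add_apply, Pi.smul_apply, smul_eq_mul]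
  nlinarith

variable (K : ℝ)

lemma sep' (he : vlt 0 e) (hsep : vlt (ub + K • e) (vb - K • e)) {a c : ℝ}
    (ha : -K ≤ a) (hc : -K ≤ c) : vlt (ub - a • e) (vb + c • e) := by
  intro i
  have h0 : (0:ℝ) < e i := by simpa using he i
  have h1 := hsep i
  simp only [Pi.sub_apply, Pi.add_apply, Pi.smul_apply, smul_eq_mul] at h1 ⊢
  nlinarith [mul_nonneg (by linarith : (0:ℝ) ≤ K + a) h0.le,
    mul_nonneg (by linarith : (0:ℝ) ≤ K + c) h0.le]

lemma MB_eq_Dif (a b c d : ℝ) :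
    MB β ub vb e a b c d = Dif β (ub - b • e) (ub - a • e) (vb + c • e) (vb + d • e) := rfl

lemma MB_nonneg (hJ : JumpMonot β) (he : vlt 0 e) (hsep : vlt (ub + K • e) (vb - K • e))
    {a b c d : ℝ} (hab : a ≤ b) (hcd : c ≤ d) (ha : -K ≤ a) (hc : -K ≤ c) :
    0 ≤ MB β ub vb e a b c d := by
  rw [MB_eq_Dif]
  exact Dif_nonneg hJ (vle_usub ub e he hab) (sep' ub vb e K he hsep ha hc)
    (vle_vadd vb e he hcd)

lemma MB_mono (hJ : JumpMonot β) (he : vlt 0 e) (hsep : vlt (ub + K • e) (vb - K • e))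
    {a a' b' b c c' d' d : ℝ} (h1 : a ≤ a') (h2 : a' ≤ b') (h3 : b' ≤ b)
    (k1 : c ≤ c') (k2 : c' ≤ d') (k3 : d' ≤ d) (ha : -K ≤ a) (hc : -K ≤ c) :
    MB β ub vb e a' b' c' d' ≤ MB β ub vb e a b c d := by
  rw [MB_eq_Dif, MB_eq_Dif]
  exact Dif_mono hJ (vle_usub ub e he h3) (vle_usub ub e he h2) (vle_usub ub e he h1)
    (sep' ub vb e K he hsep ha hc) (vle_vadd vb e he k1) (vle_vadd vb e he k2)
    (vle_vadd vb e he k3)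

lemma rc_u (hRC : RightCont β) (he : vlt 0 e) (hsep : vlt (ub + K • e) (vb - K • e))
    {s t : ℝ} (hs : -K ≤ s) (ht : -K ≤ t) :
    ∃ δ > (0:ℝ), ∀ ε, 0 < ε → ε ≤ δ → phi β ub vb e (s - ε) t = phi β ub vb e s t := by
  obtain ⟨δ, hδ, h1, _⟩ := hRC (ub - s • e) (vb + t • e) (sep' ub vb e K he hsep hs ht)
  refine ⟨δ / (‖e‖ + 1), by positivity, fun ε hε hεδ => ?_⟩
  have hpt : ub - (s - ε) • e = ub - s • e + ε • e := (ptu ub e s ε).symm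
  unfold phi
  rw [hpt]
  norm_cast
  apply h1
  · intro i
    have h0 : (0:ℝ) < e i := by simpa using he i
    simp only [Pi.add_apply, Pi.smul_apply, smul_eq_mul]
    nlinarith
  · have heq : ub - s • e + ε • e - (ub - s • e) = ε • e := by abel
    rw [heq, norm_smul, Real.norm_eq_abs, abs_of_pos hε]
    have hn : (0:ℝ) ≤ ‖e‖ := norm_nonneg e
    have hq : δ / (‖e‖ + 1) * (‖e‖ + 1) = δ := div_mul_cancel₀ _ (by positivity)
    have hqpos : 0 < δ / (‖e‖ + 1) := by positivity
    nlinarith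

lemma rc_v (hRC : RightCont β) (he : vlt 0 e) (hsep : vlt (ub + K • e) (vb - K • e))
    {s t : ℝ} (hs : -K ≤ s) (ht : -K ≤ t) :
    ∃ δ > (0:ℝ), ∀ ε, 0 < ε → ε ≤ δ → phi β ub vb e s (t + ε) = phi β ub vb e s t := by
  obtain ⟨δ, hδ, _, h2⟩ := hRC (ub - s • e) (vb + t • e) (sep' ub vb e K he hsep hs ht)
  refine ⟨δ / (‖e‖ + 1), by positivity, fun ε hε hεδ => ?_⟩
  have hpt : vb + (t + ε) • e = vb + t • e + ε • e := (ptv' vb e t ε).symm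
  unfold phi
  rw [hpt]
  norm_cast
  apply h2
  · intro i
    have h0 : (0:ℝ) < e i := by simpa using he i
    simp only [Pi.add_apply, Pi.smul_apply, smul_eq_mul]
    nlinarith
  · have heq : vb + t • e + ε • e - (vb + t • e) = ε • e := by abel
    rw [heq, norm_smul, Real.norm_eq_abs, abs_of_pos hε]
    have hn : (0:ℝ) ≤ ‖e‖ := norm_nonneg e
    have hq : δ / (‖e‖ + 1) * (‖e‖ + 1) = δ := div_mul_cancel₀ _ (by positivity)
    have hqpos : 0 < δ / (‖e‖ + 1) := by positivity
    nlinarith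

lemma quadTop (hJ : JumpMonot β) (hRC : RightCont β) (he : vlt 0 e)
    (hsep : vlt (ub + K • e) (vb - K • e)) (r : ℝ) (hr : 0 < r) (hrK : 1 + r ≤ K)
    {s t : ℝ} (hs1 : -1 ≤ s) (hs2 : s ≤ 1) (ht1 : -1 ≤ t) (ht2 : t ≤ 1) :
    ∃ δ, 0 < δ ∧ δ ≤ r ∧ ∀ ε ε', 0 < ε → ε ≤ δ → 0 < ε' → ε' ≤ δ →
      MB β ub vb e s (s + ε) t (t + ε') = 0 := by
  have hK1 : (1:ℝ) ≤ K := by linarith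
  obtain ⟨δ, hδ, hδr, hst⟩ := stab2 (fun ε ε' => MB β ub vb e s (s + ε) t (t + ε')) r hr
    (fun ε ε' hε hεr hε' hε'r => MB_nonneg β ub vb e K hJ he hsep (by linarith) (by linarith)
      (by linarith) (by linarith))
    (fun ε₁ ε₂ ε' h1 h2 h3 h4 h5 => MB_mono β ub vb e K hJ he hsep le_rfl (by linarith)
      (by linarith) le_rfl (by linarith) le_rfl (by linarith) (by linarith))
    (fun ε ε₁ ε₂ h1 h2 h3 h4 h5 => MB_mono β ub vb e K hJ he hsep le_rfl (by linarith)
      le_rfl le_rfl (by linarith) (by linarith) (by linarith) (by linarith))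
  obtain ⟨δ1, hδ1, hrc1⟩ := rc_v β ub vb e K hRC he hsep (by linarith : -K ≤ s)
    (by linarith : -K ≤ t)
  obtain ⟨δ2, hδ2, hrc2⟩ := rc_v β ub vb e K hRC he hsep (by linarith : -K ≤ s + δ)
    (by linarith : -K ≤ t)
  have hz : MB β ub vb e s (s + δ) t (t + δ) = 0 := by
    set ε' := min δ (min δ1 δ2) with hε'
    have hε'pos : 0 < ε' := lt_min hδ (lt_min hδ1 hδ2)
    have h1 : MB β ub vb e s (s + δ) t (t + ε') = 0 := by
      have e1 := hrc1 ε' hε'pos (le_trans (min_le_right _ _) (min_le_left _ _))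
      have e2 := hrc2 ε' hε'pos (le_trans (min_le_right _ _) (min_le_right _ _))
      simp only [MB] at *
      rw [e1, e2]; ring
    have h2 := hst δ ε' hδ le_rfl hε'pos (min_le_left _ _)
    rw [← h2, h1]
  refine ⟨δ, hδ, hδr, fun ε ε' hε hεδ hε' hε'δ => ?_⟩
  have := hst ε ε' hε hεδ hε' hε'δ
  rw [this, hz]

lemma quadLB (hJ : JumpMonot β) (hRC : RightCont β) (he : vlt 0 e)
    (hsep : vlt (ub + K • e) (vb - K • e)) (r : ℝ) (hr : 0 < r) (hrK : 1 + r ≤ K)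
    {s t : ℝ} (hs1 : -1 ≤ s) (hs2 : s ≤ 1) (ht1 : -1 ≤ t) (ht2 : t ≤ 1) :
    ∃ δ, 0 < δ ∧ δ ≤ r ∧ ∀ ε ε', 0 < ε → ε ≤ δ → 0 < ε' → ε' ≤ δ →
      MB β ub vb e (s - ε) s (t - ε') t = 0 := by
  have hK1 : (1:ℝ) ≤ K := by linarith
  obtain ⟨δ, hδ, hδr, hst⟩ := stab2 (fun ε ε' => MB β ub vb e (s - ε) s (t - ε') t) r hr
    (fun ε ε' hε hεr hε' hε'r => MB_nonneg β ub vb e K hJ he hsep (by linarith) (by linarith)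
      (by linarith) (by linarith))
    (fun ε₁ ε₂ ε' h1 h2 h3 h4 h5 => MB_mono β ub vb e K hJ he hsep (by linarith) (by linarith)
      (by linarith) (by linarith) (by linarith) (by linarith) (by linarith) (by linarith))
    (fun ε ε₁ ε₂ h1 h2 h3 h4 h5 => MB_mono β ub vb e K hJ he hsep (by linarith) (by linarith)
      (by linarith) (by linarith) (by linarith) (by linarith) (by linarith) (by linarith))
  obtain ⟨δ1, hδ1, hrc1⟩ := rc_u β ub vb e K hRC he hsep (by linarith : -K ≤ s)
    (by linarith : -K ≤ t - δ)
  obtain ⟨δ2, hδ2, hrc2⟩ := rc_u β ub vb e K hRC he hsep (by linarith : -K ≤ s)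
    (by linarith : -K ≤ t)
  have hz : MB β ub vb e (s - δ) s (t - δ) t = 0 := by
    set ε := min δ (min δ1 δ2) with hεdef
    have hεpos : 0 < ε := lt_min hδ (lt_min hδ1 hδ2)
    have h1 : MB β ub vb e (s - ε) s (t - δ) t = 0 := by
      have e1 := hrc1 ε hεpos (le_trans (min_le_right _ _) (min_le_left _ _))
      have e2 := hrc2 ε hεpos (le_trans (min_le_right _ _) (min_le_right _ _))
      simp only [MB] at *
      rw [e1, e2]; ring
    have h2 := hst ε δ hεpos (min_le_left _ _) hδ le_rfl
    rw [← h2, h1]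
  refine ⟨δ, hδ, hδr, fun ε ε' hε hεδ hε' hε'δ => ?_⟩
  have := hst ε ε' hε hεδ hε' hε'δ
  rw [this, hz]

lemma quadLT (hJ : JumpMonot β) (hRC : RightCont β) (he : vlt 0 e)
    (hsep : vlt (ub + K • e) (vb - K • e)) (r : ℝ) (hr : 0 < r) (hrK : 1 + r ≤ K)
    {s t : ℝ} (hs1 : -1 ≤ s) (hs2 : s ≤ 1) (ht1 : -1 ≤ t) (ht2 : t ≤ 1) :
    ∃ δ, 0 < δ ∧ δ ≤ r ∧ ∀ ε ε', 0 < ε → ε ≤ δ → 0 < ε' → ε' ≤ δ →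
      MB β ub vb e (s - ε) s t (t + ε') = 0 := by
  have hK1 : (1:ℝ) ≤ K := by linarith
  obtain ⟨δ, hδ, hδr, hst⟩ := stab2 (fun ε ε' => MB β ub vb e (s - ε) s t (t + ε')) r hr
    (fun ε ε' hε hεr hε' hε'r => MB_nonneg β ub vb e K hJ he hsep (by linarith) (by linarith)
      (by linarith) (by linarith))
    (fun ε₁ ε₂ ε' h1 h2 h3 h4 h5 => MB_mono β ub vb e K hJ he hsep (by linarith) (by linarith)
      (by linarith) (by linarith) (by linarith) (by linarith) (by linarith) (by linarith))
    (fun ε ε₁ ε₂ h1 h2 h3 h4 h5 => MB_mono β ub vb e K hJ he hsep (by linarith) (by linarith)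
      (by linarith) (by linarith) (by linarith) (by linarith) (by linarith) (by linarith))
  obtain ⟨δ1, hδ1, hrc1⟩ := rc_u β ub vb e K hRC he hsep (by linarith : -K ≤ s)
    (by linarith : -K ≤ t)
  obtain ⟨δ2, hδ2, hrc2⟩ := rc_u β ub vb e K hRC he hsep (by linarith : -K ≤ s)
    (by linarith : -K ≤ t + δ)
  have hz : MB β ub vb e (s - δ) s t (t + δ) = 0 := by
    set ε := min δ (min δ1 δ2) with hεdef
    have hεpos : 0 < ε := lt_min hδ (lt_min hδ1 hδ2)
    have h1 : MB β ub vb e (s - ε) s t (t + δ) = 0 := by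
      have e1 := hrc1 ε hεpos (le_trans (min_le_right _ _) (min_le_left _ _))
      have e2 := hrc2 ε hεpos (le_trans (min_le_right _ _) (min_le_right _ _))
      simp only [MB] at *
      rw [e1, e2]; ring
    have h2 := hst ε δ hεpos (min_le_left _ _) hδ le_rfl
    rw [← h2, h1]
  refine ⟨δ, hδ, hδr, fun ε ε' hε hεδ hε' hε'δ => ?_⟩
  have := hst ε ε' hε hεδ hε' hε'δ
  rw [this, hz]

lemma muE_smul_eq (s t ε : ℝ) :
    muE β (ε • e) (ub - s • e) (vb + t • e) =
      MB β ub vb e (s - ε) (s + ε) (t - ε) (t + ε) := by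
  simp only [muE, MB, phi, ptu, ptu', ptv, ptv']

lemma mult_formula (hJ : JumpMonot β) (hRC : RightCont β) (he : vlt 0 e)
    (hsep : vlt (ub + K • e) (vb - K • e)) (r : ℝ) (hr : 0 < r) (hrK : 1 + r ≤ K)
    {s t : ℝ} (hs1 : -1 ≤ s) (hs2 : s ≤ 1) (ht1 : -1 ≤ t) (ht2 : t ≤ 1) :
    ∃ δ, 0 < δ ∧ δ ≤ r ∧ ∀ ε ε', 0 < ε → ε ≤ δ → 0 < ε' → ε' ≤ δ →
      mult β (ub - s • e) (vb + t • e) = MB β ub vb e s (s + ε) (t - ε') t := by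
  have hK1 : (1:ℝ) ≤ K := by linarith
  -- full square stabilization
  obtain ⟨δ₁, hδ₁, hδ₁r, hst₁⟩ := stab1 (fun ε => MB β ub vb e (s - ε) (s + ε) (t - ε) (t + ε))
    r hr
    (fun ε hε hεr => MB_nonneg β ub vb e K hJ he hsep (by linarith) (by linarith)
      (by linarith) (by linarith))
    (fun ε ε' hε hεε' hε'r => MB_mono β ub vb e K hJ he hsep (by linarith) (by linarith)
      (by linarith) (by linarith) (by linarith) (by linarith) (by linarith) (by linarith))
  -- bottom-right quadrant stabilization
  obtain ⟨δ₂, hδ₂, hδ₂r, hst₂⟩ := stab2 (fun ε ε' => MB β ub vb e s (s + ε) (t - ε') t) r hr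
    (fun ε ε' hε hεr hε' hε'r => MB_nonneg β ub vb e K hJ he hsep (by linarith) (by linarith)
      (by linarith) (by linarith))
    (fun ε₁ ε₂ ε' h1 h2 h3 h4 h5 => MB_mono β ub vb e K hJ he hsep (by linarith) (by linarith)
      (by linarith) (by linarith) (by linarith) (by linarith) (by linarith) (by linarith))
    (fun ε ε₁ ε₂ h1 h2 h3 h4 h5 => MB_mono β ub vb e K hJ he hsep (by linarith) (by linarith)
      (by linarith) (by linarith) (by linarith) (by linarith) (by linarith) (by linarith))
  obtain ⟨δ₃, hδ₃, hδ₃r, hLB⟩ := quadLB β ub vb e K hJ hRC he hsep r hr hrK hs1 hs2 ht1 ht2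
  obtain ⟨δ₄, hδ₄, hδ₄r, hLT⟩ := quadLT β ub vb e K hJ hRC he hsep r hr hrK hs1 hs2 ht1 ht2
  obtain ⟨δ₅, hδ₅, hδ₅r, hTop⟩ := quadTop β ub vb e K hJ hRC he hsep r hr hrK hs1 hs2 ht1 ht2
  set δ := min δ₁ (min δ₂ (min δ₃ (min δ₄ δ₅))) with hδdef
  have hδpos : 0 < δ := lt_min hδ₁ (lt_min hδ₂ (lt_min hδ₃ (lt_min hδ₄ hδ₅)))
  have hδ1 : δ ≤ δ₁ := min_le_left _ _
  have hδ2 : δ ≤ δ₂ := le_trans (min_le_right _ _) (min_le_left _ _)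
  have hδ3 : δ ≤ δ₃ := le_trans (min_le_right _ _) (le_trans (min_le_right _ _) (min_le_left _ _))
  have hδ4 : δ ≤ δ₄ := le_trans (min_le_right _ _)
    (le_trans (min_le_right _ _) (le_trans (min_le_right _ _) (min_le_left _ _)))
  have hδ5 : δ ≤ δ₅ := le_trans (min_le_right _ _)
    (le_trans (min_le_right _ _) (le_trans (min_le_right _ _) (min_le_right _ _)))
  have hδr : δ ≤ r := le_trans hδ1 hδ₁r
  set m₀ := MB β ub vb e (s - δ₁) (s + δ₁) (t - δ₁) (t + δ₁) with hm₀
  have hηδ : ∀ ε, 0 < ε → ε ≤ δ₁ → MB β ub vb e (s - ε) (s + ε) (t - ε) (t + ε) = m₀ := by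
    intro ε hε hεδ
    have := hst₁ ε hε hεδ
    simpa using this
  -- the four-quadrant decomposition
  have hsplit : ∀ ε : ℝ,
      MB β ub vb e (s - ε) (s + ε) (t - ε) (t + ε) =
        MB β ub vb e (s - ε) s (t - ε) t + MB β ub vb e s (s + ε) (t - ε) t +
        MB β ub vb e (s - ε) s t (t + ε) + MB β ub vb e s (s + ε) t (t + ε) := by
    intro ε; simp only [MB]; ring
  have hq : ∀ ε ε', 0 < ε → ε ≤ δ → 0 < ε' → ε' ≤ δ →
      MB β ub vb e s (s + ε) (t - ε') t = m₀ := by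
    intro ε ε' hε hεδ hε' hε'δ
    have h1 := hst₂ ε ε' hε (le_trans hεδ hδ2) hε' (le_trans hε'δ hδ2)
    have h2 := hst₂ δ δ hδpos hδ2 hδpos hδ2
    have h3 : MB β ub vb e (s - δ) (s + δ) (t - δ) (t + δ) = m₀ := hηδ δ hδpos hδ1
    rw [hsplit δ] at h3
    have h4 := hLB δ δ hδpos hδ3 hδpos hδ3
    have h5 := hLT δ δ hδpos hδ4 hδpos hδ4
    have h6 := hTop δ δ hδpos hδ5 hδpos hδ5
    rw [h4, h5, h6] at h3
    -- h3 : 0 + MB s (s+δ) (t-δ) t + 0 + 0 = m₀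
    have h7 : MB β ub vb e s (s + δ) (t - δ) t = m₀ := by linarith
    rw [h1]; linarith
  -- mult equals m₀
  have hmult : mult β (ub - s • e) (vb + t • e) = m₀ := by
    unfold mult
    apply IsLeast.csInf_eq
    constructor
    · refine ⟨δ • e, ?_, ?_, ?_⟩
      · intro i
        have h0 : (0:ℝ) < e i := by simpa using he i
        simp only [Pi.smul_apply, smul_eq_mul, Pi.zero_apply]
        positivity
      · rw [ptu, ptv]
        exact sep' ub vb e K he hsep (by linarith) (by linarith)
      · rw [muE_smul_eq]
        exact (hηδ δ hδpos hδ1).symm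
    · rintro z ⟨e', he', hlt', rfl⟩
      obtain ⟨c, hc, hcf⟩ := posmin (fun i => e' i / e i)
        (fun i => div_pos (by simpa using he' i) (by simpa using he i))
      set ε := min δ c with hεdef
      have hεpos : 0 < ε := lt_min hδpos hc
      have hεe' : ∀ i, ε * e i ≤ e' i := by
        intro i
        have h0 : (0:ℝ) < e i := by simpa using he i
        have := hcf i
        rw [le_div_iff₀ h0] at this
        have hεc : ε ≤ c := min_le_right _ _
        nlinarith
      have hεδ : ε ≤ δ := min_le_left _ _
      have step1 : m₀ = muE β (ε • e) (ub - s • e) (vb + t • e) := by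
        rw [muE_smul_eq]
        exact (hηδ ε hεpos (le_trans hεδ hδ1)).symm
      rw [step1]
      -- compare the two muE's via Dif monotonicity
      have hDif : ∀ E : Fin n → ℝ, muE β E (ub - s • e) (vb + t • e) =
          Dif β (ub - s • e - E) (ub - s • e + E) (vb + t • e - E) (vb + t • e + E) := by
        intro E; rfl
      rw [hDif, hDif]
      apply Dif_mono hJ
      · intro i
        have h0 : (0:ℝ) < e i := by simpa using he i
        have := hεe' i
        simp only [Pi.sub_apply, Pi.smul_apply, smul_eq_mul]
        linarith
      · intro i
        have h0 : (0:ℝ) < e i := by simpa using he i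
        simp only [Pi.sub_apply, Pi.add_apply, Pi.smul_apply, smul_eq_mul]
        nlinarith
      · intro i
        have h0 : (0:ℝ) < e i := by simpa using he i
        have := hεe' i
        simp only [Pi.sub_apply, Pi.add_apply, Pi.smul_apply, smul_eq_mul]
        linarith
      · exact hlt'
      · intro i
        have h0 : (0:ℝ) < e i := by simpa using he i
        have := hεe' i
        simp only [Pi.sub_apply, Pi.add_apply, Pi.smul_apply, smul_eq_mul]
        linarith
      · intro i
        have h0 : (0:ℝ) < e i := by simpa using he i
        simp only [Pi.sub_apply, Pi.add_apply, Pi.smul_apply, smul_eq_mul]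
        nlinarith
      · intro i
        have h0 : (0:ℝ) < e i := by simpa using he i
        have := hεe' i
        simp only [Pi.sub_apply, Pi.add_apply, Pi.smul_apply, smul_eq_mul]
        linarith
  refine ⟨δ, hδpos, hδr, fun ε ε' hε hεδ hε' hε'δ => ?_⟩
  rw [hmult, hq ε ε' hε hεδ hε' hε'δ]

lemma strip_vanish (hJ : JumpMonot β) (hRC : RightCont β) (he : vlt 0 e)
    (hsep : vlt (ub + K • e) (vb - K • e)) (r : ℝ) (hr : 0 < r) (hrK : 1 + r ≤ K)
    {a b c d x : ℝ} (ha : -1 ≤ a) (hab : a ≤ b) (hb : b ≤ 1) (hc : -1 ≤ c) (hcd : c ≤ d)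
    (hd : d ≤ 1) (hax : a ≤ x) (hxb : x < b)
    (hz : ∀ t, c < t → t ≤ d → mult β (ub - x • e) (vb + t • e) = 0) :
    ∃ δ > (0:ℝ), ∀ ε, 0 < ε → ε ≤ δ → MB β ub vb e x (x + ε) c d = 0 := by
  have hK1 : (1:ℝ) ≤ K := by linarith
  have hx1 : -1 ≤ x := le_trans ha hax
  have hx2 : x ≤ 1 := le_trans (le_of_lt hxb) hb
  -- stabilization of the strip measure, for each τ
  have key : ∀ τ, c ≤ τ → τ ≤ d → ∃ δ, 0 < δ ∧ δ ≤ r ∧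
      (∀ ε, 0 < ε → ε ≤ δ → MB β ub vb e x (x + ε) c τ = MB β ub vb e x (x + δ) c τ) ∧
      IsLeast {z : ℤ | ∃ ε, 0 < ε ∧ ε ≤ r ∧ z = MB β ub vb e x (x + ε) c τ}
        (MB β ub vb e x (x + δ) c τ) := by
    intro τ hcτ hτd
    have hτ1 : -1 ≤ τ := le_trans hc hcτ
    have hτ2 : τ ≤ 1 := le_trans hτd hd
    obtain ⟨δ, hδ, hδr, hst⟩ := stab1 (fun ε => MB β ub vb e x (x + ε) c τ) r hr
      (fun ε hε hεr => MB_nonneg β ub vb e K hJ he hsep (by linarith) (by linarith)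
        (by linarith) (by linarith))
      (fun ε ε' hε hεε' hε'r => MB_mono β ub vb e K hJ he hsep (by linarith) (by linarith)
        (by linarith) (by linarith) (by linarith) (by linarith) (by linarith) (by linarith))
    refine ⟨δ, hδ, hδr, fun ε hε hεδ => by simpa using hst ε hε hεδ, ⟨⟨δ, hδ, hδr, rfl⟩, ?_⟩⟩
    rintro z ⟨ε, hε, hεr, rfl⟩
    have h1 : MB β ub vb e x (x + min δ ε) c τ = MB β ub vb e x (x + δ) c τ := by
      simpa using hst (min δ ε) (lt_min hδ hε) (min_le_left _ _)
    rw [← h1]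
    exact MB_mono β ub vb e K hJ he hsep le_rfl
      (by linarith [lt_min hδ hε])
      (by linarith [min_le_right δ ε]) le_rfl (by linarith) le_rfl (by linarith) (by linarith)
  choose δf hδf1 hδf2 hδf3 hδf4 using key
  set ρ : ℝ → ℤ := fun τ =>
    sInf {z : ℤ | ∃ ε, 0 < ε ∧ ε ≤ r ∧ z = MB β ub vb e x (x + ε) c τ} with hρ
  have ρ_eval : ∀ τ (h1 : c ≤ τ) (h2 : τ ≤ d), ∀ ε, 0 < ε → ε ≤ δf τ h1 h2 →
      ρ τ = MB β ub vb e x (x + ε) c τ := by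
    intro τ h1 h2 ε hε hεδ
    have := (hδf4 τ h1 h2).csInf_eq
    rw [hρ]; simp only
    rw [this, ← hδf3 τ h1 h2 ε hε hεδ]
  -- real induction on ρ over [c,d]
  have main : ρ d = ρ c := by
    apply realInd ρ c d hcd
    · -- left continuity, using vanishing multiplicity
      intro τ hcτ hτd
      have hτ1 : -1 ≤ τ := by linarith
      have hτ2 : τ ≤ 1 := le_trans hτd hd
      obtain ⟨δq, hδq, hδqr, hMF⟩ := mult_formula β ub vb e K hJ hRC he hsep r hr hrK
        hx1 hx2 hτ1 hτ2
      refine ⟨δq, hδq, fun ε' hε' hε'δ hge => ?_⟩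
      have hc1 : c ≤ τ - ε' := hge
      have hd1 : τ - ε' ≤ d := by linarith
      set ε := min (δf τ (le_of_lt hcτ) hτd) (min (δf (τ - ε') hc1 hd1) δq) with hεdef
      have hεpos : 0 < ε := lt_min (hδf1 _ _ _) (lt_min (hδf1 _ _ _) hδq)
      have e1 : ρ τ = MB β ub vb e x (x + ε) c τ :=
        ρ_eval τ (le_of_lt hcτ) hτd ε hεpos (min_le_left _ _)
      have e2 : ρ (τ - ε') = MB β ub vb e x (x + ε) c (τ - ε') :=
        ρ_eval (τ - ε') hc1 hd1 ε hεpos (le_trans (min_le_right _ _) (min_le_left _ _))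
      have e3 : MB β ub vb e x (x + ε) (τ - ε') τ =
          mult β (ub - x • e) (vb + τ • e) :=
        (hMF ε ε' hεpos (le_trans (min_le_right _ _) (min_le_right _ _)) hε' hε'δ).symm
      have e4 : mult β (ub - x • e) (vb + τ • e) = 0 := hz τ hcτ hτd
      have esplit : MB β ub vb e x (x + ε) c τ =
          MB β ub vb e x (x + ε) c (τ - ε') + MB β ub vb e x (x + ε) (τ - ε') τ := by
        simp only [MB]; ring
      rw [e1, e2, esplit, e3, e4, add_zero]
    · -- right continuity
      intro τ hcτ hτd
      have hτ1 : -1 ≤ τ := le_trans hc hcτ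
      have hτ2 : τ ≤ 1 := by linarith
      obtain ⟨δT, hδT, hδTr, hTop⟩ := quadTop β ub vb e K hJ hRC he hsep r hr hrK
        hx1 hx2 hτ1 hτ2
      set ε' := min δT (d - τ) with hε'def
      have hε'pos : 0 < ε' := lt_min hδT (by linarith)
      have hτε'd : τ + ε' ≤ d := by
        have := min_le_right δT (d - τ); simp only [hε'def]; linarith
      have hcτε' : c ≤ τ + ε' := by linarith [le_of_lt hε'pos]
      refine ⟨ε', hε'pos, hτε'd, ?_⟩
      set ε := min (δf τ hcτ (by linarith)) (min (δf (τ + ε') hcτε' hτε'd) δT) with hεdef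
      have hεpos : 0 < ε := lt_min (hδf1 _ _ _) (lt_min (hδf1 _ _ _) hδT)
      have e1 : ρ τ = MB β ub vb e x (x + ε) c τ :=
        ρ_eval τ hcτ (by linarith) ε hεpos (min_le_left _ _)
      have e2 : ρ (τ + ε') = MB β ub vb e x (x + ε) c (τ + ε') :=
        ρ_eval (τ + ε') hcτε' hτε'd ε hεpos (le_trans (min_le_right _ _) (min_le_left _ _))
      have e3 : MB β ub vb e x (x + ε) τ (τ + ε') = 0 :=
        hTop ε ε' hεpos (le_trans (min_le_right _ _) (min_le_right _ _)) hε'pos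
          (min_le_left _ _)
      have esplit : MB β ub vb e x (x + ε) c (τ + ε') =
          MB β ub vb e x (x + ε) c τ + MB β ub vb e x (x + ε) τ (τ + ε') := by
        simp only [MB]; ring
      rw [e1, e2, esplit, e3, add_zero]
  have hρc : ρ c = 0 := by
    have : ρ c = MB β ub vb e x (x + δf c le_rfl hcd) c c :=
      ρ_eval c le_rfl hcd _ (hδf1 _ _ _) le_rfl
    rw [this]; simp only [MB]; ring
  refine ⟨δf d hcd le_rfl, hδf1 _ _ _, fun ε hε hεδ => ?_⟩
  rw [← ρ_eval d hcd le_rfl ε hε hεδ, main, hρc]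

lemma box_vanish (hJ : JumpMonot β) (hRC : RightCont β) (he : vlt 0 e)
    (hsep : vlt (ub + K • e) (vb - K • e)) (r : ℝ) (hr : 0 < r) (hrK : 1 + r ≤ K)
    {a b c d : ℝ} (ha : -1 ≤ a) (hab : a ≤ b) (hb : b ≤ 1) (hc : -1 ≤ c) (hcd : c ≤ d)
    (hd : d ≤ 1)
    (hz : ∀ p : ℝ × ℝ, a ≤ p.1 → p.1 < b → c < p.2 → p.2 ≤ d →
      mult β (ub - p.1 • e) (vb + p.2 • e) = 0) :
    MB β ub vb e a b c d = 0 := by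
  have hK1 : (1:ℝ) ≤ K := by linarith
  have main : MB β ub vb e a b c d = MB β ub vb e a a c d := by
    apply realInd (fun y => MB β ub vb e a y c d) a b hab
    · intro x hax hxb
      obtain ⟨δ1, hδ1, hrc1⟩ := rc_u β ub vb e K hRC he hsep
        (by linarith : -K ≤ x) (by linarith : -K ≤ c)
      obtain ⟨δ2, hδ2, hrc2⟩ := rc_u β ub vb e K hRC he hsep
        (by linarith : -K ≤ x) (by linarith : -K ≤ d)
      refine ⟨min δ1 δ2, lt_min hδ1 hδ2, fun ε hε hεδ hge => ?_⟩
      have e1 := hrc1 ε hε (le_trans hεδ (min_le_left _ _))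
      have e2 := hrc2 ε hε (le_trans hεδ (min_le_right _ _))
      show MB β ub vb e a (x - ε) c d = MB β ub vb e a x c d
      have esplit : MB β ub vb e a x c d =
          MB β ub vb e a (x - ε) c d + MB β ub vb e (x - ε) x c d := by
        simp only [MB]; ring
      have ez : MB β ub vb e (x - ε) x c d = 0 := by
        simp only [MB]; rw [e1, e2]; ring
      rw [esplit, ez, add_zero]
    · intro x hax hxb
      obtain ⟨δs, hδs, hstr⟩ := strip_vanish β ub vb e K hJ hRC he hsep r hr hrK
        ha hab hb hc hcd hd hax hxb
        (fun t h1 h2 => hz (x, t) hax hxb h1 h2)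
      have hle : x + min δs (b - x) ≤ b := by linarith [min_le_right δs (b - x)]
      refine ⟨min δs (b - x), lt_min hδs (by linarith), hle, ?_⟩
      show MB β ub vb e a (x + min δs (b - x)) c d = MB β ub vb e a x c d
      have e3 := hstr (min δs (b - x)) (lt_min hδs (by linarith)) (min_le_left _ _)
      have esplit : MB β ub vb e a (x + min δs (b - x)) c d =
          MB β ub vb e a x c d + MB β ub vb e x (x + min δs (b - x)) c d := by
        simp only [MB]; ring
      rw [esplit, e3, add_zero]
  have haa : MB β ub vb e a a c d = 0 := by simp only [MB]; ring
  rw [main, haa]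

/-- The multiplicity function in scalar coordinates. -/
noncomputable def fmlt : ℝ × ℝ → ℤ := fun p => mult β (ub - p.1 • e) (vb + p.2 • e)

/-- A half-open scalar box. -/
def Sbox (a b c d : ℝ) : Set (ℝ × ℝ) := {p | a ≤ p.1 ∧ p.1 < b ∧ c < p.2 ∧ p.2 ≤ d}

lemma union_piece {S1 S2 : Set (ℝ × ℝ)} {f : ℝ × ℝ → ℤ} {z1 z2 : ℤ} (hd : Disjoint S1 S2)
    (h1 : (S1 ∩ Function.support f).Finite ∧ ∑ᶠ p ∈ S1, f p = z1)
    (h2 : (S2 ∩ Function.support f).Finite ∧ ∑ᶠ p ∈ S2, f p = z2) :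
    ((S1 ∪ S2) ∩ Function.support f).Finite ∧ ∑ᶠ p ∈ S1 ∪ S2, f p = z1 + z2 := by
  constructor
  · rw [Set.union_inter_distrib_right]
    exact h1.1.union h2.1
  · rw [finsum_mem_union' hd h1.1 h2.1, h1.2, h2.2]

/-- In-box multiplicities are trapped between `0` and the box measure. -/
lemma mult_bounds (hJ : JumpMonot β) (hRC : RightCont β) (he : vlt 0 e)
    (hsep : vlt (ub + K • e) (vb - K • e)) (r : ℝ) (hr : 0 < r) (hrK : 1 + r ≤ K)
    {a b c d : ℝ} (ha : -1 ≤ a) (hb : b ≤ 1) (hc : -1 ≤ c) (hd : d ≤ 1)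
    {p : ℝ × ℝ} (hp : p ∈ Sbox a b c d) :
    0 ≤ fmlt β ub vb e p ∧ fmlt β ub vb e p ≤ MB β ub vb e a b c d := by
  have hK1 : (1:ℝ) ≤ K := by linarith
  obtain ⟨h1, h2, h3, h4⟩ := hp
  obtain ⟨δq, hδq, hδqr, hMF⟩ := mult_formula β ub vb e K hJ hRC he hsep r hr hrK
    (by linarith : -1 ≤ p.1) (by linarith : p.1 ≤ 1) (by linarith : -1 ≤ p.2)
    (by linarith : p.2 ≤ 1)
  set ε := min δq (min (b - p.1) (p.2 - c)) with hεdef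
  have hεpos : 0 < ε := lt_min hδq (lt_min (by linarith) (by linarith))
  have hεδ : ε ≤ δq := min_le_left _ _
  have hεb : p.1 + ε ≤ b := by
    have := le_trans (min_le_right δq _) (min_le_left (b - p.1) (p.2 - c)); linarith
  have hεc : c ≤ p.2 - ε := by
    have := le_trans (min_le_right δq _) (min_le_right (b - p.1) (p.2 - c)); linarith
  have hform : fmlt β ub vb e p = MB β ub vb e p.1 (p.1 + ε) (p.2 - ε) p.2 :=
    hMF ε ε hεpos hεδ hεpos hεδ
  constructor
  · rw [hform]
    exact MB_nonneg β ub vb e K hJ he hsep (by linarith) (by linarith) (by linarith)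
      (by linarith)
  · rw [hform]
    exact MB_mono β ub vb e K hJ he hsep (by linarith) (by linarith) (by linarith)
      (by linarith) (by linarith) (by linarith) (by linarith) (by linarith)

/-- In a small box realizing the multiplicity of its upper-left corner, all other points
have zero multiplicity. -/
lemma center_cell (hJ : JumpMonot β) (hRC : RightCont β) (he : vlt 0 e)
    (hsep : vlt (ub + K • e) (vb - K • e)) (r : ℝ) (hr : 0 < r) (hrK : 1 + r ≤ K)
    {sS tS ε δq : ℝ} (hs1 : -1 ≤ sS) (hsb : sS + ε ≤ 1) (htc : -1 ≤ tS - ε) (ht2 : tS ≤ 1)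
    (hε : 0 < ε) (hεδq : ε ≤ δq)
    (hMF : ∀ ε1 ε2, 0 < ε1 → ε1 ≤ δq → 0 < ε2 → ε2 ≤ δq →
      fmlt β ub vb e (sS, tS) = MB β ub vb e sS (sS + ε1) (tS - ε2) tS) :
    ∀ q ∈ Sbox sS (sS + ε) (tS - ε) tS, q ≠ (sS, tS) → fmlt β ub vb e q = 0 := by
  have hK1 : (1:ℝ) ≤ K := by linarith
  rintro q ⟨h1, h2, h3, h4⟩ hne
  have hfm : fmlt β ub vb e q = mult β (ub - q.1 • e) (vb + q.2 • e) := rfl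
  have hδq : 0 < δq := lt_of_lt_of_le hε hεδq
  obtain ⟨δ', hδ', hδ'r, hMF'⟩ := mult_formula β ub vb e K hJ hRC he hsep r hr hrK
    (by linarith : -1 ≤ q.1) (by linarith : q.1 ≤ 1) (by linarith : -1 ≤ q.2)
    (by linarith : q.2 ≤ 1)
  have hcenter : fmlt β ub vb e (sS, tS) = MB β ub vb e sS (sS + ε) (tS - ε) tS :=
    hMF ε ε hε hεδq hε hεδq
  have hqnn : 0 ≤ fmlt β ub vb e q := by
    rw [hfm, hMF' δ' δ' hδ' le_rfl hδ' le_rfl]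
    exact MB_nonneg β ub vb e K hJ he hsep (by linarith) (by linarith) (by linarith)
      (by linarith)
  rcases eq_or_lt_of_le h1 with heq | hlt
  · -- q.1 = sS, hence q.2 < tS
    have hq2 : q.2 < tS := by
      rcases eq_or_lt_of_le h4 with heq2 | hlt2
      · exfalso; apply hne; ext
        · exact heq.symm
        · exact heq2
      · exact hlt2
    set ε1 := min δ' ε with hε1def
    set ε2 := min δ' (q.2 - (tS - ε)) with hε2def
    have hε1pos : 0 < ε1 := lt_min hδ' hε
    have hε2pos : 0 < ε2 := lt_min hδ' (by linarith)
    have hε1a : ε1 ≤ δ' := min_le_left _ _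
    have hε1b : ε1 ≤ ε := min_le_right _ _
    have hε2a : ε2 ≤ δ' := min_le_left _ _
    have hε2b : ε2 ≤ q.2 - (tS - ε) := min_le_right _ _
    have hqform : fmlt β ub vb e q = MB β ub vb e q.1 (q.1 + ε1) (q.2 - ε2) q.2 := by
      rw [hfm]; exact hMF' ε1 ε2 hε1pos hε1a hε2pos hε2a
    have hB : fmlt β ub vb e q ≤ MB β ub vb e sS (sS + ε) (tS - ε) q.2 := by
      rw [hqform, ← heq]
      exact MB_mono β ub vb e K hJ he hsep le_rfl (by linarith) (by linarith) (by linarith)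
        (by linarith) le_rfl (by linarith) (by linarith)
    have hA : fmlt β ub vb e (sS, tS) ≤ MB β ub vb e sS (sS + ε) q.2 tS := by
      set ε2' := min δq (tS - q.2) with hε2'def
      have hε2'pos : 0 < ε2' := lt_min hδq (by linarith)
      have hε2'a : ε2' ≤ δq := min_le_left _ _
      have hε2'b : ε2' ≤ tS - q.2 := min_le_right _ _
      rw [hMF ε ε2' hε hεδq hε2'pos hε2'a]
      exact MB_mono β ub vb e K hJ he hsep le_rfl (by linarith) le_rfl (by linarith)
        (by linarith) le_rfl (by linarith) (by linarith)
    have hsplit : MB β ub vb e sS (sS + ε) (tS - ε) tS =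
        MB β ub vb e sS (sS + ε) (tS - ε) q.2 + MB β ub vb e sS (sS + ε) q.2 tS := by
      simp only [MB]; ring
    omega
  · -- sS < q.1 : vertical split of the cell at q.1
    set ε1 := min δ' (sS + ε - q.1) with hε1def
    set ε2 := min δ' (q.2 - (tS - ε)) with hε2def
    have hε1pos : 0 < ε1 := lt_min hδ' (by linarith)
    have hε2pos : 0 < ε2 := lt_min hδ' (by linarith)
    have hε1a : ε1 ≤ δ' := min_le_left _ _
    have hε1b : ε1 ≤ sS + ε - q.1 := min_le_right _ _
    have hε2a : ε2 ≤ δ' := min_le_left _ _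
    have hε2b : ε2 ≤ q.2 - (tS - ε) := min_le_right _ _
    have hqform : fmlt β ub vb e q = MB β ub vb e q.1 (q.1 + ε1) (q.2 - ε2) q.2 := by
      rw [hfm]; exact hMF' ε1 ε2 hε1pos hε1a hε2pos hε2a
    have hB : fmlt β ub vb e q ≤ MB β ub vb e q.1 (sS + ε) (tS - ε) tS := by
      rw [hqform]
      exact MB_mono β ub vb e K hJ he hsep le_rfl (by linarith) (by linarith) (by linarith)
        (by linarith) (by linarith) (by linarith) (by linarith)
    have hA : fmlt β ub vb e (sS, tS) ≤ MB β ub vb e sS q.1 (tS - ε) tS := by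
      set ε1' := min δq (q.1 - sS) with hε1'def
      have hε1'pos : 0 < ε1' := lt_min hδq (by linarith)
      have hε1'a : ε1' ≤ δq := min_le_left _ _
      have hε1'b : ε1' ≤ q.1 - sS := min_le_right _ _
      rw [hMF ε1' ε hε1'pos hε1'a hε hεδq]
      exact MB_mono β ub vb e K hJ he hsep le_rfl (by linarith) (by linarith) le_rfl
        (by linarith) le_rfl (by linarith) (by linarith)
    have hsplit : MB β ub vb e sS (sS + ε) (tS - ε) tS =
        MB β ub vb e sS q.1 (tS - ε) tS + MB β ub vb e q.1 (sS + ε) (tS - ε) tS := by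
      simp only [MB]; ring
    omega

lemma main_count (hJ : JumpMonot β) (hRC : RightCont β) (he : vlt 0 e)
    (hsep : vlt (ub + K • e) (vb - K • e)) (r : ℝ) (hr : 0 < r) (hrK : 1 + r ≤ K) :
    ∀ N : ℕ, ∀ a b c d : ℝ, -1 ≤ a → a ≤ b → b ≤ 1 → -1 ≤ c → c ≤ d → d ≤ 1 →
      MB β ub vb e a b c d ≤ (N : ℤ) →
      (Sbox a b c d ∩ Function.support (fmlt β ub vb e)).Finite ∧
      ∑ᶠ p ∈ Sbox a b c d, fmlt β ub vb e p = MB β ub vb e a b c d := by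
  have hK1 : (1:ℝ) ≤ K := by linarith
  intro N
  induction N with
  | zero =>
    intro a b c d ha hab hb hc hcd hd hMB
    have hnn : 0 ≤ MB β ub vb e a b c d :=
      MB_nonneg β ub vb e K hJ he hsep hab hcd (by linarith) (by linarith)
    have hMB0 : MB β ub vb e a b c d = 0 := le_antisymm (by exact_mod_cast hMB) hnn
    have hall : ∀ p ∈ Sbox a b c d, fmlt β ub vb e p = 0 := by
      intro p hp
      obtain ⟨h0, h1⟩ := mult_bounds β ub vb e K hJ hRC he hsep r hr hrK ha hb hc hd hp
      omega
    obtain ⟨hemp, hsum⟩ := finsum_mem_zero' _ _ hall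
    refine ⟨hemp ▸ Set.finite_empty, by rw [hsum, hMB0]⟩
  | succ N ih =>
    intro a b c d ha hab hb hc hcd hd hMB
    by_cases hall : ∀ p ∈ Sbox a b c d, fmlt β ub vb e p = 0
    · have hMB0 : MB β ub vb e a b c d = 0 :=
        box_vanish β ub vb e K hJ hRC he hsep r hr hrK ha hab hb hc hcd hd
          (fun p h1 h2 h3 h4 => hall p ⟨h1, h2, h3, h4⟩)
      obtain ⟨hemp, hsum⟩ := finsum_mem_zero' _ _ hall
      refine ⟨hemp ▸ Set.finite_empty, by rw [hsum, hMB0]⟩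
    · push_neg at hall
      obtain ⟨p0, hp0, hp0ne⟩ := hall
      obtain ⟨h1, h2, h3, h4⟩ := hp0
      have hMBle : MB β ub vb e a b c d ≤ (N : ℤ) + 1 := by exact_mod_cast hMB
      obtain ⟨δq, hδq, hδqr, hMF⟩ := mult_formula β ub vb e K hJ hRC he hsep r hr hrK
        (by linarith : -1 ≤ p0.1) (by linarith : p0.1 ≤ 1) (by linarith : -1 ≤ p0.2)
        (by linarith : p0.2 ≤ 1)
      set ε := min δq (min (b - p0.1) (p0.2 - c)) with hεdef
      have hεpos : 0 < ε := lt_min hδq (lt_min (by linarith) (by linarith))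
      have hεδq : ε ≤ δq := min_le_left _ _
      have hεb : p0.1 + ε ≤ b := by
        have := le_trans (min_le_right δq _) (min_le_left (b - p0.1) (p0.2 - c)); linarith
      have hεc : c ≤ p0.2 - ε := by
        have := le_trans (min_le_right δq _) (min_le_right (b - p0.1) (p0.2 - c)); linarith
      have hmform : fmlt β ub vb e p0 =
          MB β ub vb e p0.1 (p0.1 + ε) (p0.2 - ε) p0.2 := hMF ε ε hεpos hεδq hεpos hεδq
      have hm0 : 0 ≤ fmlt β ub vb e p0 := by
        rw [hmform]
        exact MB_nonneg β ub vb e K hJ he hsep (by linarith) (by linarith) (by linarith)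
          (by linarith)
      have hm1 : 1 ≤ fmlt β ub vb e p0 := by omega
      -- cells
      set C1 := Sbox a p0.1 c d with hC1
      set C3 := Sbox (p0.1 + ε) b c d with hC3
      set C2b := Sbox p0.1 (p0.1 + ε) c (p0.2 - ε) with hC2b
      set C2t := Sbox p0.1 (p0.1 + ε) p0.2 d with hC2t
      set CC := Sbox p0.1 (p0.1 + ε) (p0.2 - ε) p0.2 with hCC
      have hsplit1 : MB β ub vb e a b c d = MB β ub vb e a p0.1 c d +
          MB β ub vb e p0.1 (p0.1 + ε) c d + MB β ub vb e (p0.1 + ε) b c d := by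
        simp only [MB]; ring
      have hsplit2 : MB β ub vb e p0.1 (p0.1 + ε) c d =
          MB β ub vb e p0.1 (p0.1 + ε) c (p0.2 - ε) +
          MB β ub vb e p0.1 (p0.1 + ε) (p0.2 - ε) p0.2 +
          MB β ub vb e p0.1 (p0.1 + ε) p0.2 d := by
        simp only [MB]; ring
      have nn1 : 0 ≤ MB β ub vb e a p0.1 c d :=
        MB_nonneg β ub vb e K hJ he hsep (by linarith) (by linarith) (by linarith)
          (by linarith)
      have nn3 : 0 ≤ MB β ub vb e (p0.1 + ε) b c d :=
        MB_nonneg β ub vb e K hJ he hsep (by linarith) (by linarith) (by linarith)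
          (by linarith)
      have nn2b : 0 ≤ MB β ub vb e p0.1 (p0.1 + ε) c (p0.2 - ε) :=
        MB_nonneg β ub vb e K hJ he hsep (by linarith) (by linarith) (by linarith)
          (by linarith)
      have nn2t : 0 ≤ MB β ub vb e p0.1 (p0.1 + ε) p0.2 d :=
        MB_nonneg β ub vb e K hJ he hsep (by linarith) (by linarith) (by linarith)
          (by linarith)
      -- the center cell sum
      have hp0CC : p0 ∈ CC := ⟨le_rfl, by linarith, by linarith, le_rfl⟩
      have hcc0 : ∀ q ∈ CC, q ≠ p0 → fmlt β ub vb e q = 0 := by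
        intro q hq hqne
        refine center_cell β ub vb e K hJ hRC he hsep r hr hrK
          (by linarith : -1 ≤ p0.1) (by linarith) (by linarith) (by linarith)
          hεpos hεδq (fun ε1 ε2 k1 k2 k3 k4 => ?_) q hq (by simpa using hqne)
        have : fmlt β ub vb e (p0.1, p0.2) = fmlt β ub vb e p0 := by
          rw [Prod.mk.eta]
        rw [this]
        exact hMF ε1 ε2 k1 k2 k3 k4
      obtain ⟨hsubCC, hsumCC⟩ := finsum_mem_single' CC (fmlt β ub vb e) p0 hp0CC hcc0
      have hfinCC : (CC ∩ Function.support (fmlt β ub vb e)).Finite :=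
        Set.Finite.subset (Set.finite_singleton p0) hsubCC
      -- apply induction hypothesis to the four side cells
      have ih1 := ih a p0.1 c d ha h1 (by linarith) hc hcd hd (by omega)
      have ih3 := ih (p0.1 + ε) b c d (by linarith) hεb hb hc hcd hd (by omega)
      have ih2b := ih p0.1 (p0.1 + ε) c (p0.2 - ε) (by linarith) (by linarith)
        (by linarith) hc hεc (by linarith) (by omega)
      have ih2t := ih p0.1 (p0.1 + ε) p0.2 d (by linarith) (by linarith) (by linarith)
        (by linarith) h4 hd (by omega)
      -- decomposition of the box
      have hSeq : Sbox a b c d = C1 ∪ (C3 ∪ (C2b ∪ (C2t ∪ CC))) := by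
        ext p
        simp only [hC1, hC3, hC2b, hC2t, hCC, Sbox, Set.mem_setOf_eq, Set.mem_union]
        constructor
        · rintro ⟨k1, k2, k3, k4⟩
          by_cases hA : p.1 < p0.1
          · exact Or.inl ⟨k1, hA, k3, k4⟩
          · push_neg at hA
            by_cases hB : p0.1 + ε ≤ p.1
            · exact Or.inr (Or.inl ⟨hB, k2, k3, k4⟩)
            · push_neg at hB
              by_cases hC : p.2 ≤ p0.2 - ε
              · exact Or.inr (Or.inr (Or.inl ⟨hA, hB, k3, hC⟩))
              · push_neg at hC
                by_cases hD : p0.2 < p.2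
                · exact Or.inr (Or.inr (Or.inr (Or.inl ⟨hA, hB, hD, k4⟩)))
                · push_neg at hD
                  exact Or.inr (Or.inr (Or.inr (Or.inr ⟨hA, hB, hC, hD⟩)))
        · rintro (⟨k1, k2, k3, k4⟩ | ⟨k1, k2, k3, k4⟩ | ⟨k1, k2, k3, k4⟩ |
            ⟨k1, k2, k3, k4⟩ | ⟨k1, k2, k3, k4⟩)
          · exact ⟨k1, by linarith, k3, k4⟩
          · exact ⟨by linarith, k2, k3, k4⟩
          · exact ⟨by linarith, by linarith, k3, by linarith⟩
          · exact ⟨by linarith, by linarith, by linarith, k4⟩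
          · exact ⟨by linarith, by linarith, by linarith, by linarith⟩
      -- disjointness
      have d4 : Disjoint C2t CC := by
        rw [Set.disjoint_left]
        rintro p ⟨k1, k2, k3, k4⟩ ⟨l1, l2, l3, l4⟩
        linarith
      have d3 : Disjoint C2b (C2t ∪ CC) := by
        rw [Set.disjoint_left]
        rintro p ⟨k1, k2, k3, k4⟩ (⟨l1, l2, l3, l4⟩ | ⟨l1, l2, l3, l4⟩) <;> linarith
      have d2 : Disjoint C3 (C2b ∪ (C2t ∪ CC)) := by
        rw [Set.disjoint_left]
        rintro p ⟨k1, k2, k3, k4⟩ (⟨l1, l2, l3, l4⟩ | ⟨l1, l2, l3, l4⟩ | ⟨l1, l2, l3, l4⟩)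
          <;> linarith
      have d1 : Disjoint C1 (C3 ∪ (C2b ∪ (C2t ∪ CC))) := by
        rw [Set.disjoint_left]
        rintro p ⟨k1, k2, k3, k4⟩
          (⟨l1, l2, l3, l4⟩ | ⟨l1, l2, l3, l4⟩ | ⟨l1, l2, l3, l4⟩ | ⟨l1, l2, l3, l4⟩)
          <;> linarith
      -- assemble
      have hCCpair : (CC ∩ Function.support (fmlt β ub vb e)).Finite ∧
          ∑ᶠ p ∈ CC, fmlt β ub vb e p = fmlt β ub vb e p0 := ⟨hfinCC, hsumCC⟩
      have step1 := union_piece d4 ih2t hCCpair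
      have step2 := union_piece d3 ih2b step1
      have step3 := union_piece d2 ih3 step2
      have step4 := union_piece d1 ih1 step3
      rw [hSeq]
      refine ⟨step4.1, ?_⟩
      rw [step4.2, hmform]
      linarith

/-- Proposition 4.2: `μ_e(ū,v̄)` counts the cornerpoints (with multiplicity) in the set
`L_e(ū,v̄)`. -/
theorem muE_counts_cornerpoints
    (n : ℕ) (β : (Fin n → ℝ) × (Fin n → ℝ) → ℕ) (hβa : Admissible β) (hβt : Tame β)
    (ubar vbar : Fin n → ℝ) (h : vlt ubar vbar)
    (e : Fin n → ℝ) (he : vlt 0 e) (he2 : vlt (ubar + e) (vbar - e)) :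
    {p : ℝ × ℝ | -1 ≤ p.1 ∧ p.1 < 1 ∧ -1 < p.2 ∧ p.2 ≤ 1 ∧
      mult β (ubar - p.1 • e) (vbar + p.2 • e) ≠ 0}.Finite ∧
    muE β e ubar vbar =
      ∑ᶠ p ∈ {p : ℝ × ℝ | -1 ≤ p.1 ∧ p.1 < 1 ∧ -1 < p.2 ∧ p.2 ≤ 1},
        mult β (ubar - p.1 • e) (vbar + p.2 • e) := by
  obtain ⟨hM, hJ, hRC⟩ := hβa
  -- choose the separation constant K and the room r
  obtain ⟨c, hc, hcf⟩ := posmin (fun i => ((vbar i - e i) - (ubar i + e i)) / (2 * e i))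
    (fun i => by
      have h0 : (0:ℝ) < e i := by simpa using he i
      have h1 := he2 i
      simp only [Pi.add_apply, Pi.sub_apply] at h1
      exact div_pos (by linarith) (by linarith))
  set K := 1 + c / 2 with hKdef
  have hsep : vlt (ubar + K • e) (vbar - K • e) := by
    intro i
    have h0 : (0:ℝ) < e i := by simpa using he i
    have h1 := hcf i
    rw [le_div_iff₀ (by linarith)] at h1
    simp only [Pi.add_apply, Pi.sub_apply, Pi.smul_apply, smul_eq_mul]
    rw [hKdef]
    nlinarith [mul_pos hc h0]
  have hrK : 1 + c / 2 ≤ K := le_of_eq hKdef.symm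
  have hr : (0:ℝ) < c / 2 := by linarith
  -- apply the counting lemma
  obtain ⟨hfin, hsum⟩ := main_count β ubar vbar e K hJ hRC he hsep (c / 2) hr hrK
    (MB β ubar vbar e (-1) 1 (-1) 1).toNat (-1) 1 (-1) 1 (by norm_num) (by norm_num)
    (by norm_num) (by norm_num) (by norm_num) (by norm_num) (Int.self_le_toNat _)
  have hμ : muE β e ubar vbar = MB β ubar vbar e (-1) 1 (-1) 1 := by
    simp only [muE, MB, phi, neg_one_smul, one_smul, sub_neg_eq_add, ← sub_eq_add_neg]
  have hset : {p : ℝ × ℝ | -1 ≤ p.1 ∧ p.1 < 1 ∧ -1 < p.2 ∧ p.2 ≤ 1 ∧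
      mult β (ubar - p.1 • e) (vbar + p.2 • e) ≠ 0} =
      Sbox (-1) 1 (-1) 1 ∩ Function.support (fmlt β ubar vbar e) := by
    ext p
    simp only [Sbox, fmlt, Set.mem_setOf_eq, Set.mem_inter_iff, Function.mem_support]
    tauto
  constructor
  · rw [hset]; exact hfin
  · rw [hμ]
    exact hsum.symm
end PersistSpace
end

section
/- Let β : ℝⁿ×ℝⁿ → ℕ be admissible and tame, and let ū ∈ ℝⁿ. Then there exists ε > 0 such that ū + e ≺ (1/ε)·𝟙 for every e ∈ ℝⁿ with e ≻ 0 and ‖e‖∞ < ε, and moreover for every such e and every v ∈ ℝⁿ with v ≻ (1/ε)·𝟙, the family of multiplicities at infinity (μ∞(ū − s·e)) indexed by real numbers s with −1 ≤ s < 1 has finite support and β(ū+e, v) − β(ū−e, v) = Σ_{−1≤s<1} μ∞(ū − s·e). -/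
namespace PersistSpace

variable {n : ℕ}

/-! ### Auxiliary development for Proposition 4.6 -/

section Aux

variable {n : ℕ}

lemma vlt_of_vle_of_vlt {u v w : Fin n → ℝ} (h : vle u v) (h' : vlt v w) : vlt u w :=
  fun i => lt_of_le_of_lt (h i) (h' i)

lemma vlt_of_vlt_of_vle {u v w : Fin n → ℝ} (h : vlt u v) (h' : vle v w) : vlt u w :=
  fun i => lt_of_lt_of_le (h i) (h' i)

lemma vle_sub_add {u e : Fin n → ℝ} (he : vlt 0 e) : vle (u - e) (u + e) := by
  intro i
  have : (0:ℝ) < e i := by simpa using he i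
  simp only [Pi.sub_apply, Pi.add_apply]
  linarith

/-- The "limit" function `F(u) = β(u, v)` for `v` large. -/
def Fb (β : (Fin n → ℝ) × (Fin n → ℝ) → ℕ) (C : ℝ) (u : Fin n → ℝ) : ℕ :=
  β (u, fun i => max C (u i) + 1)

lemma vlt_wv (C : ℝ) (u : Fin n → ℝ) : vlt u (fun i => max C (u i) + 1) := by
  intro i
  have := le_max_right C (u i)
  simp only []
  linarith

lemma C_le_wv (C : ℝ) (u : Fin n → ℝ) : ∀ i, C ≤ (fun i => max C (u i) + 1) i := by
  intro i
  have := le_max_left C (u i)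
  simp only []
  linarith

variable {β : (Fin n → ℝ) × (Fin n → ℝ) → ℕ} {C : ℝ}

/-- Shorthand for the boundedness half of tameness. -/
def BoundedAtInfty (β : (Fin n → ℝ) × (Fin n → ℝ) → ℕ) (C : ℝ) : Prop :=
  ∀ u v v' : Fin n → ℝ, vlt u v → vlt u v' → (∀ i, C ≤ v i) → (∀ i, C ≤ v' i) →
    β (u, v) = β (u, v')

lemma F_eq (hb : BoundedAtInfty β C) {u v : Fin n → ℝ} (h : vlt u v) (hC : ∀ i, C ≤ v i) :
    β (u, v) = Fb β C u :=
  hb u v _ h (vlt_wv C u) hC (C_le_wv C u)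

lemma F_mono (hmono : Monot β) (hb : BoundedAtInfty β C) {u u' : Fin n → ℝ}
    (h : vle u u') : Fb β C u ≤ Fb β C u' := by
  set V : Fin n → ℝ := fun i => max (max C (u i)) (u' i) + 1 with hV
  have hCV : ∀ i, C ≤ V i := fun i => by
    have h1 := le_max_left C (u i); have h2 := le_max_left (max C (u i)) (u' i)
    simp only [hV]; linarith
  have hu'V : vlt u' V := fun i => by
    have h2 := le_max_right (max C (u i)) (u' i)
    simp only [hV]; linarith
  have huV : vlt u V := vlt_of_vle_of_vlt h hu'V
  calc Fb β C u = β (u, V) := (F_eq hb huV hCV).symm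
    _ ≤ β (u', V) := hmono.1 u u' V h hu'V
    _ = Fb β C u' := F_eq hb hu'V hCV

lemma F_rc (hrc : RightCont β) (hb : BoundedAtInfty β C) (u : Fin n → ℝ) :
    ∃ δ > (0:ℝ), ∀ u' : Fin n → ℝ, vle u u' → ‖u' - u‖ < δ → Fb β C u' = Fb β C u := by
  obtain ⟨δ, hδ, h1, _⟩ := hrc u (fun i => max C (u i) + 1) (vlt_wv C u)
  refine ⟨min δ 1, lt_min hδ one_pos, ?_⟩
  intro u' hle hn
  have hcoord : ∀ i, u' i < max C (u i) + 1 := by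
    intro i
    have h2 : ‖(u' - u) i‖ ≤ ‖u' - u‖ := norm_le_pi_norm (u' - u) i
    have h3 : |u' i - u i| ≤ ‖u' - u‖ := by simpa [Real.norm_eq_abs] using h2
    have h4 : ‖u' - u‖ < 1 := lt_of_lt_of_le hn (min_le_right _ _)
    have h5 := le_max_right C (u i)
    have h6 : u' i - u i ≤ |u' i - u i| := le_abs_self _
    linarith
  have hu'V : vlt u' (fun i => max C (u i) + 1) := hcoord
  have := h1 u' hle (lt_of_lt_of_le hn (min_le_left _ _))
  calc Fb β C u' = β (u', fun i => max C (u i) + 1) :=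
        (F_eq hb hu'V (C_le_wv C u)).symm
    _ = β (u, fun i => max C (u i) + 1) := this
    _ = Fb β C u := rfl

lemma muInfE_ge (hmono : Monot β) (hjump : JumpMonot β) (hb : BoundedAtInfty β C)
    {e v u : Fin n → ℝ} (he : vlt 0 e) (hv : vlt (u + e) v) :
    (Fb β C (u + e) : ℤ) - Fb β C (u - e) ≤ muInfE β e v u := by
  set V : Fin n → ℝ := fun i => max C (v i) + 1 with hVdef
  have h1 : vle v V := fun i => by
    have := le_max_right C (v i); simp only [hVdef]; linarith
  have h2 : ∀ i, C ≤ V i := fun i => by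
    have := le_max_left C (v i); simp only [hVdef]; linarith
  have h3 : vlt (u + e) V := vlt_of_vlt_of_vle hv h1
  have h4 : vle (u - e) (u + e) := vle_sub_add he
  have h5 : vlt (u - e) V := vlt_of_vle_of_vlt h4 h3
  have hj := hjump (u - e) (u + e) v V h4 hv h1
  have e1 : β (u + e, V) = Fb β C (u + e) := F_eq hb h3 h2
  have e2 : β (u - e, V) = Fb β C (u - e) := F_eq hb h5 h2
  rw [e1, e2] at hj
  exact hj

lemma muInfE_eq (hb : BoundedAtInfty β C) {e v u : Fin n → ℝ} (he : vlt 0 e)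
    (hv : vlt (u + e) v) (hC : ∀ i, C ≤ v i) :
    muInfE β e v u = (Fb β C (u + e) : ℤ) - Fb β C (u - e) := by
  have h1 : vlt (u - e) v := vlt_of_vle_of_vlt (vle_sub_add he) hv
  unfold muInfE
  rw [F_eq hb hv hC, F_eq hb h1 hC]

/-- Right limit of an antitone `ℕ`-valued function. -/
noncomputable def rlim (g : ℝ → ℕ) (s : ℝ) : ℕ :=
  sSup (g '' Set.Ioc s (s + 1))

lemma rlim_spec {g : ℝ → ℕ} (hg : Antitone g) (s : ℝ) :
    ∃ t', 0 < t' ∧ t' ≤ 1 ∧ ∀ t, 0 < t → t ≤ t' → g (s + t) = rlim g s := by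
  have hne : (g '' Set.Ioc s (s + 1)).Nonempty :=
    ⟨g (s + 1), ⟨s + 1, ⟨by linarith, le_refl _⟩, rfl⟩⟩
  have hbdd : BddAbove (g '' Set.Ioc s (s + 1)) := by
    refine ⟨g s, ?_⟩
    rintro x ⟨y, hy, rfl⟩
    exact hg hy.1.le
  obtain ⟨x, hx, hgx⟩ : ∃ x ∈ Set.Ioc s (s + 1), g x = rlim g s := by
    have := Nat.sSup_mem hne hbdd
    obtain ⟨x, hx, hgx⟩ := this
    exact ⟨x, hx, hgx⟩
  refine ⟨x - s, by linarith [hx.1], by linarith [hx.2], ?_⟩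
  intro t ht ht'
  have hle1 : g (s + t) ≤ rlim g s :=
    le_csSup hbdd ⟨s + t, ⟨by linarith, by linarith [hx.2]⟩, rfl⟩
  have hle2 : rlim g s ≤ g (s + t) := by
    rw [← hgx]
    exact hg (by linarith : s + t ≤ x)
  exact le_antisymm hle1 hle2

lemma rlim_le {g : ℝ → ℕ} (hg : Antitone g) (s : ℝ) : rlim g s ≤ g s := by
  obtain ⟨t', ht0, _, hsp⟩ := rlim_spec hg s
  rw [← hsp t' ht0 (le_refl _)]
  exact hg (by linarith)

lemma le_rlim {g : ℝ → ℕ} (hg : Antitone g) {s b : ℝ} (h : s < b) :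
    g b ≤ rlim g s := by
  obtain ⟨t', ht0, _, hsp⟩ := rlim_spec hg s
  have ht : 0 < min t' (b - s) := lt_min ht0 (by linarith)
  rw [← hsp _ ht (min_le_left _ _)]
  exact hg (by have := min_le_right t' (b - s); linarith)

lemma exists_small {e e'' : Fin n → ℝ} (he : vlt 0 e) (he'' : vlt 0 e'')
    {τ : ℝ} (hτ : 0 < τ) : ∃ t, 0 < t ∧ t ≤ τ ∧ ∀ i, t * e i ≤ e'' i := by
  rcases isEmpty_or_nonempty (Fin n) with h | h
  · exact ⟨τ, hτ, le_refl _, fun i => isEmptyElim i⟩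
  · have hu : (Finset.univ : Finset (Fin n)).Nonempty := Finset.univ_nonempty
    set r := Finset.univ.inf' hu (fun i => e'' i / e i) with hr
    have hrpos : 0 < r := by
      rw [hr, Finset.lt_inf'_iff]
      intro i _
      exact div_pos (by simpa using he'' i) (by simpa using he i)
    refine ⟨min τ r, lt_min hτ hrpos, min_le_left _ _, fun i => ?_⟩
    have hei : (0:ℝ) < e i := by simpa using he i
    have h1 : min τ r ≤ e'' i / e i :=
      le_trans (min_le_right _ _) (Finset.inf'_le _ (Finset.mem_univ i))
    calc min τ r * e i ≤ (e'' i / e i) * e i :=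
          mul_le_mul_of_nonneg_right h1 hei.le
      _ = e'' i := div_mul_cancel₀ _ (ne_of_gt hei)

/-- The restriction of `F` to the line through `ubar` in direction `-e`. -/
def gline (β : (Fin n → ℝ) × (Fin n → ℝ) → ℕ) (C : ℝ) (ubar e : Fin n → ℝ) (s : ℝ) : ℕ :=
  Fb β C (ubar - s • e)

lemma g_anti (hmono : Monot β) (hb : BoundedAtInfty β C) {ubar e : Fin n → ℝ}
    (he : vlt 0 e) : Antitone (gline β C ubar e) := by
  intro s s' h
  apply F_mono hmono hb
  intro i
  have hei : (0:ℝ) < e i := by simpa using he i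
  simp only [Pi.sub_apply, Pi.smul_apply, smul_eq_mul]
  have := mul_le_mul_of_nonneg_right h hei.le
  linarith

lemma g_leftcont (hrc : RightCont β) (hb : BoundedAtInfty β C) {ubar e : Fin n → ℝ}
    (he : vlt 0 e) :
    ∀ s : ℝ, ∃ δ > (0:ℝ), ∀ s', s - δ < s' → s' ≤ s →
      gline β C ubar e s' = gline β C ubar e s := by
  intro s
  obtain ⟨δF, hδF, hF⟩ := F_rc hrc hb (ubar - s • e)
  refine ⟨δF / (‖e‖ + 1), by positivity, ?_⟩
  intro s' h1 h2
  apply hF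
  · intro i
    have hei : (0:ℝ) ≤ e i := by
      have := he i; simp only [Pi.zero_apply] at this; linarith
    simp only [Pi.sub_apply, Pi.smul_apply, smul_eq_mul]
    have := mul_le_mul_of_nonneg_right h2 hei
    linarith
  · have heq : (ubar - s' • e) - (ubar - s • e) = (s - s') • e := by module
    rw [heq, norm_smul, Real.norm_eq_abs]
    have h3 : |s - s'| = s - s' := abs_of_nonneg (by linarith)
    rw [h3]
    have h4 : (s - s') * (‖e‖ + 1) < δF := by
      rw [← lt_div_iff₀ (by positivity : (0:ℝ) < ‖e‖ + 1)]
      linarith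
    nlinarith [norm_nonneg e]

end Aux


section Aux2

variable {n : ℕ} {β : (Fin n → ℝ) × (Fin n → ℝ) → ℕ} {C : ℝ}

/-- The multiplicity at infinity equals the jump of `g` along the line. -/
lemma multInf_eq_jump (hmono : Monot β) (hjump : JumpMonot β) (hrc : RightCont β)
    (hb : BoundedAtInfty β C) {ubar e : Fin n → ℝ} (he : vlt 0 e) (s : ℝ) :
    multInf β (ubar - s • e) =
      (gline β C ubar e s : ℤ) - rlim (gline β C ubar e) s := by
  set g := gline β C ubar e with hg
  set u := ubar - s • e with hu
  have hganti : Antitone g := g_anti hmono hb he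
  obtain ⟨t', ht'0, ht'1, hsp⟩ := rlim_spec hganti s
  obtain ⟨δ, hδ, hlc⟩ := g_leftcont hrc hb he s
  set τ := min t' (δ / 2) with hτdef
  have hτ0 : 0 < τ := lt_min ht'0 (by linarith)
  have hτt' : τ ≤ t' := min_le_left _ _
  have hτδ : τ ≤ δ / 2 := min_le_right _ _
  have hgsτ : g (s - τ) = g s := hlc (s - τ) (by linarith) (by linarith)
  have hgpτ : g (s + τ) = rlim g s := hsp τ hτ0 hτt'
  have he' : vlt 0 (τ • e) := by
    intro i
    have hei : (0:ℝ) < e i := by simpa using he i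
    simp only [Pi.zero_apply, Pi.smul_apply, smul_eq_mul]
    positivity
  set V : Fin n → ℝ := fun i => max C ((u + τ • e) i) + 1 with hVdef
  have hV1 : vlt (u + τ • e) V := vlt_wv C _
  have hV2 : ∀ i, C ≤ V i := C_le_wv C _
  have e1 : u + τ • e = ubar - (s - τ) • e := by rw [hu]; module
  have e2 : u - τ • e = ubar - (s + τ) • e := by rw [hu]; module
  have hmem_val : muInfE β (τ • e) V u = (g s : ℤ) - rlim g s := by
    rw [muInfE_eq hb he' hV1 hV2, e1, e2]
    show (g (s - τ) : ℤ) - g (s + τ) = _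
    rw [hgsτ, hgpτ]
  have hlb : ∀ m ∈ {m : ℤ | ∃ e' v : Fin n → ℝ,
      vlt 0 e' ∧ vlt (u + e') v ∧ m = muInfE β e' v u}, (g s : ℤ) - rlim g s ≤ m := by
    rintro m ⟨e'', v, he'', hv, rfl⟩
    obtain ⟨t, ht0, htτ, hte⟩ := exists_small he he'' hτ0
    have h1 : (Fb β C (u + e'') : ℤ) - Fb β C (u - e'') ≤ muInfE β e'' v u :=
      muInfE_ge hmono hjump hb he'' hv
    have hle1 : vle (u + t • e) (u + e'') := by
      intro i
      simp only [Pi.add_apply, Pi.smul_apply, smul_eq_mul]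
      have := hte i
      linarith
    have hle2 : vle (u - e'') (u - t • e) := by
      intro i
      simp only [Pi.sub_apply, Pi.smul_apply, smul_eq_mul]
      have := hte i
      linarith
    have h2 : Fb β C (u + t • e) ≤ Fb β C (u + e'') := F_mono hmono hb hle1
    have h3 : Fb β C (u - e'') ≤ Fb β C (u - t • e) := F_mono hmono hb hle2
    have e3 : u + t • e = ubar - (s - t) • e := by rw [hu]; module
    have e4 : u - t • e = ubar - (s + t) • e := by rw [hu]; module
    rw [e3] at h2
    rw [e4] at h3
    have h4 : g s ≤ g (s - t) := hganti (by linarith)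
    have h5 : g (s + t) = rlim g s := hsp t ht0 (le_trans htτ hτt')
    have h2' : (g (s - t) : ℤ) ≤ Fb β C (u + e'') := by exact_mod_cast h2
    have h3' : (Fb β C (u - e'') : ℤ) ≤ g (s + t) := by exact_mod_cast h3
    have h4' : (g s : ℤ) ≤ g (s - t) := by exact_mod_cast h4
    have h5' : (g (s + t) : ℤ) = rlim g s := by exact_mod_cast h5
    linarith
  have hmem : ((g s : ℤ) - rlim g s) ∈ {m : ℤ | ∃ e' v : Fin n → ℝ,
      vlt 0 e' ∧ vlt (u + e') v ∧ m = muInfE β e' v u} :=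
    ⟨τ • e, V, he', hV1, hmem_val.symm⟩
  unfold multInf
  exact le_antisymm (csInf_le ⟨_, hlb⟩ hmem) (le_csInf ⟨_, hmem⟩ hlb)

/-- Jumps of an antitone `ℕ`-valued function form a finite set on any `Ico`. -/
lemma jumps_finite {g : ℝ → ℕ} (hg : Antitone g) (a b : ℝ) :
    {s | s ∈ Set.Ico a b ∧ g s ≠ rlim g s}.Finite := by
  set S := {s | s ∈ Set.Ico a b ∧ g s ≠ rlim g s} with hS
  have key : ∀ s ∈ S, ∀ s' ∈ S, s < s' → g s' < g s := by
    intro s hs s' hs' hlt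
    have h1 : g s' ≤ rlim g s := le_rlim hg hlt
    have h2 : rlim g s < g s := lt_of_le_of_ne (rlim_le hg s) (fun hEq => hs.2 hEq.symm)
    exact lt_of_le_of_lt h1 h2
  have hinj : Set.InjOn g S := by
    intro s hs s' hs' hEq
    rcases lt_trichotomy s s' with h | h | h
    · exact absurd hEq (ne_of_gt (key s hs s' hs' h))
    · exact h
    · exact absurd hEq (ne_of_lt (key s' hs' s hs h))
  have himg : g '' S ⊆ Set.Iic (g a) := by
    rintro x ⟨s, hs, rfl⟩
    exact hg hs.1.1
  exact Set.Finite.of_finite_image ((Set.finite_Iic (g a)).subset himg) hinj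

/-- If there are no jumps on `[a, b)` then `g` is constant on `[a, b]`. -/
lemma const_of_no_jump {g : ℝ → ℕ} (hg : Antitone g)
    (hlc : ∀ s : ℝ, ∃ δ > (0:ℝ), ∀ s', s - δ < s' → s' ≤ s → g s' = g s)
    {a b : ℝ} (hab : a ≤ b) (h : ∀ s, a ≤ s → s < b → g s = rlim g s) :
    g b = g a := by
  set S := {s | s ∈ Set.Icc a b ∧ g s = g a} with hS
  have haS : a ∈ S := ⟨⟨le_refl _, hab⟩, rfl⟩
  have hbdd : BddAbove S := ⟨b, fun s hs => hs.1.2⟩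
  set c := sSup S with hc
  have hac : a ≤ c := le_csSup hbdd haS
  have hcb : c ≤ b := csSup_le ⟨a, haS⟩ fun s hs => hs.1.2
  have hgc : g c = g a := by
    obtain ⟨δ, hδ, hl⟩ := hlc c
    obtain ⟨s, hsS, hsc⟩ := exists_lt_of_lt_csSup ⟨a, haS⟩ (by linarith : c - δ < c)
    have hsc' : s ≤ c := le_csSup hbdd hsS
    rw [← hl s hsc hsc']
    exact hsS.2
  rcases eq_or_lt_of_le hcb with hEq | hlt
  · rw [← hEq]; exact hgc
  · exfalso
    have hj := h c hac hlt
    obtain ⟨t', ht'0, _, hsp⟩ := rlim_spec hg c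
    set t := min t' (b - c) with ht
    have ht0 : 0 < t := lt_min ht'0 (by linarith)
    have hgt : g (c + t) = rlim g c := hsp t ht0 (min_le_left _ _)
    have hmem : c + t ∈ S := by
      refine ⟨⟨by linarith, ?_⟩, ?_⟩
      · have := min_le_right t' (b - c); rw [ht]; linarith
      · rw [hgt, ← hj, hgc]
    have := le_csSup hbdd hmem
    linarith

/-- Telescoping: the total decrease equals the sum of the jumps. -/
lemma tele {g : ℝ → ℕ} (hg : Antitone g)
    (hlc : ∀ s : ℝ, ∃ δ > (0:ℝ), ∀ s', s - δ < s' → s' ≤ s → g s' = g s) :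
    ∀ N : ℕ, ∀ a b : ℝ, a ≤ b → g a ≤ g b + N →
      ∑ᶠ s ∈ Set.Ico a b, ((g s : ℤ) - rlim g s) = (g a : ℤ) - g b := by
  intro N
  induction N with
  | zero =>
    intro a b hab hN
    have hba : g b ≤ g a := hg hab
    have heq : g a = g b := le_antisymm (by simpa using hN) hba
    have hz : Set.EqOn (fun s => (g s : ℤ) - rlim g s) 0 (Set.Ico a b) := by
      intro s hs
      have h1 : g s ≤ g a := hg hs.1
      have h2 : g b ≤ rlim g s := le_rlim hg hs.2
      have h3 : rlim g s ≤ g s := rlim_le hg s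
      have h4 : rlim g s = g s := by omega
      simp [h4]
    rw [finsum_mem_of_eqOn_zero hz, heq]
    ring
  | succ N ih =>
    intro a b hab hN
    by_cases hJ : ∀ s, a ≤ s → s < b → g s = rlim g s
    · have hba := const_of_no_jump hg hlc hab hJ
      have hz : Set.EqOn (fun s => (g s : ℤ) - rlim g s) 0 (Set.Ico a b) := by
        intro s hs
        have := hJ s hs.1 hs.2
        simp [← this]
      rw [finsum_mem_of_eqOn_zero hz, hba]
      ring
    · push_neg at hJ
      set f : ℝ → ℤ := fun s => (g s : ℤ) - rlim g s with hf
      have hfne : ∀ s, f s ≠ 0 ↔ g s ≠ rlim g s := by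
        intro s
        rw [hf]
        constructor
        · intro h1 h2
          apply h1
          simp [h2]
        · intro h1 h2
          apply h1
          have : (g s : ℤ) = rlim g s := by linarith [sub_eq_zero.mp h2]
          exact_mod_cast this
      set Jset := {s | s ∈ Set.Ico a b ∧ g s ≠ rlim g s} with hJset
      have hfin : Jset.Finite := jumps_finite hg a b
      have hne : Jset.Nonempty := by
        obtain ⟨s, h1, h2, h3⟩ := hJ
        exact ⟨s, ⟨h1, h2⟩, h3⟩
      have hne' : hfin.toFinset.Nonempty := by
        rw [Set.Finite.toFinset_nonempty]
        exact hne
      set s₀ := hfin.toFinset.min' hne' with hs₀def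
      have hs₀J : s₀ ∈ Jset := by
        have := hfin.toFinset.min'_mem hne'
        rwa [Set.Finite.mem_toFinset] at this
      have hs₀min : ∀ s ∈ Jset, s₀ ≤ s := fun s hs =>
        Finset.min'_le _ s (by rwa [Set.Finite.mem_toFinset])
      obtain ⟨⟨has₀, hs₀b⟩, hjump₀⟩ := hs₀J
      have hga : g s₀ = g a := by
        apply const_of_no_jump hg hlc has₀
        intro s h1 h2
        by_contra hne''
        exact absurd (hs₀min s ⟨⟨h1, lt_trans h2 hs₀b⟩, hne''⟩) (not_le.mpr h2)
      obtain ⟨t', ht'0, _, hsp⟩ := rlim_spec hg s₀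
      set t := min t' ((b - s₀) / 2) with htdef
      have ht0 : 0 < t := lt_min ht'0 (by linarith)
      have htt' : t ≤ t' := min_le_left _ _
      set a' := s₀ + t with ha'def
      have ha'b : a' < b := by
        have := min_le_right t' ((b - s₀) / 2)
        rw [ha'def]
        rw [htdef]
        linarith
      have haa' : a ≤ a' := by rw [ha'def]; linarith
      have hga' : g a' = rlim g s₀ := hsp t ht0 htt'
      have hlt : rlim g s₀ < g s₀ :=
        lt_of_le_of_ne (rlim_le hg s₀) (fun hcontra => hjump₀ hcontra.symm)
      have hnoj : ∀ s, a ≤ s → s < a' → s ≠ s₀ → g s = rlim g s := by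
        intro s h1 h2 h3
        rcases lt_or_gt_of_ne h3 with h | h
        · by_contra hc
          exact absurd (hs₀min s ⟨⟨h1, by linarith⟩, hc⟩) (not_le.mpr h)
        · obtain ⟨ts, hts0, _, hsps⟩ := rlim_spec hg s
          have hst' : s < s₀ + t' := by
            rw [ha'def] at h2
            linarith
          set r := min ts (s₀ + t' - s) with hrdef
          have hr0 : 0 < r := lt_min hts0 (by linarith)
          have h4 : g (s + r) = rlim g s := hsps r hr0 (min_le_left _ _)
          have h5 : g s = rlim g s₀ := by
            have hrw : s = s₀ + (s - s₀) := by ring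
            rw [hrw]
            exact hsp (s - s₀) (by linarith) (by rw [ha'def] at h2; linarith)
          have h6 : g (s + r) = rlim g s₀ := by
            have hrw : s + r = s₀ + (s + r - s₀) := by ring
            rw [hrw]
            refine hsp _ (by linarith) ?_
            have := min_le_right ts (s₀ + t' - s)
            rw [hrdef]
            linarith
          rw [h5, ← h4, h6]
      have hsplit : Set.Ico a b = Set.Ico a a' ∪ Set.Ico a' b :=
        (Set.Ico_union_Ico_eq_Ico haa' (le_of_lt ha'b)).symm
      have hd : Disjoint (Set.Ico a a') (Set.Ico a' b) :=
        Set.Ico_disjoint_Ico_same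
      have hsupp1 : (Set.Ico a a' ∩ Function.support f).Finite := by
        apply hfin.subset
        rintro s ⟨hs1, hs2⟩
        refine ⟨⟨hs1.1, lt_of_lt_of_le hs1.2 (le_of_lt ha'b)⟩, (hfne s).mp hs2⟩
      have hsupp2 : (Set.Ico a' b ∩ Function.support f).Finite := by
        apply hfin.subset
        rintro s ⟨hs1, hs2⟩
        refine ⟨⟨le_trans haa' hs1.1, hs1.2⟩, (hfne s).mp hs2⟩
      have hsum1 : ∑ᶠ s ∈ Set.Ico a a', f s = f s₀ := by
        rw [finsum_mem_inter_support_eq f (Set.Ico a a') {s₀} ?_, finsum_mem_singleton]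
        ext s
        simp only [Set.mem_inter_iff, Set.mem_Ico, Set.mem_singleton_iff,
          Function.mem_support]
        constructor
        · rintro ⟨⟨hs1, hs2⟩, hs3⟩
          refine ⟨?_, hs3⟩
          by_contra hne''
          exact ((hfne s).mp hs3) (hnoj s hs1 hs2 hne'')
        · rintro ⟨rfl, hs3⟩
          have hs₀a' : s₀ < a' := by rw [ha'def]; linarith
          exact ⟨⟨has₀, hs₀a'⟩, hs3⟩
      have hga'lt : g a' < g a := by
        rw [hga']
        rw [← hga]
        exact hlt
      have hIH : g a' ≤ g b + N := by
        have h7 : g b ≤ g a' := hg (le_of_lt ha'b)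
        omega
      have hsum2 := ih a' b (le_of_lt ha'b) hIH
      have hfs₀ : f s₀ = (g a : ℤ) - g a' := by
        rw [hf]
        simp only []
        rw [hga, hga']
      calc ∑ᶠ s ∈ Set.Ico a b, f s
          = (∑ᶠ s ∈ Set.Ico a a', f s) + ∑ᶠ s ∈ Set.Ico a' b, f s := by
            rw [hsplit]
            exact finsum_mem_union' hd hsupp1 hsupp2
        _ = ((g a : ℤ) - g a') + ((g a' : ℤ) - g b) := by rw [hsum1, hsum2, hfs₀]
        _ = (g a : ℤ) - g b := by ring

end Aux2


/-- Proposition 4.6: `μ∞_{e,v}(ū)` counts the cornerpoints at infinity (with multiplicity)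
in the set `N_e(ū)`, for `v` beyond `(1/ε)·𝟙`. -/
theorem muInfE_counts_cornerpoints_at_infinity
    (n : ℕ) (β : (Fin n → ℝ) × (Fin n → ℝ) → ℕ) (hβa : Admissible β) (hβt : Tame β)
    (ubar : Fin n → ℝ) :
    ∃ ε > (0:ℝ),
      (∀ e : Fin n → ℝ, vlt 0 e → ‖e‖ < ε → vlt (ubar + e) (fun _ => 1/ε)) ∧
      ∀ e : Fin n → ℝ, vlt 0 e → ‖e‖ < ε → ∀ v : Fin n → ℝ, vlt (fun _ => 1/ε) v →
        {s : ℝ | -1 ≤ s ∧ s < 1 ∧ multInf β (ubar - s • e) ≠ 0}.Finite ∧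
        (β (ubar + e, v) : ℤ) - β (ubar - e, v) =
          ∑ᶠ s ∈ Set.Ico (-1:ℝ) 1, multInf β (ubar - s • e) := by
  obtain ⟨hmono, hjump, hrc⟩ := hβa
  obtain ⟨C, hC0, hb', _⟩ := hβt
  have hb : BoundedAtInfty β C := hb'
  set M := ‖ubar‖ with hM
  have hM0 : 0 ≤ M := norm_nonneg _
  have hMi : ∀ i, ubar i ≤ M := by
    intro i
    have := norm_le_pi_norm ubar i
    rw [Real.norm_eq_abs] at this
    exact le_trans (le_abs_self _) this
  set ε := 1 / (C + M + 2) with hε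
  have hεpos : 0 < ε := by rw [hε]; positivity
  have hinv : 1 / ε = C + M + 2 := by rw [hε, one_div_one_div]
  have hεle : ε ≤ 1 / 2 := by
    rw [hε]
    apply div_le_div_of_nonneg_left (by norm_num) (by norm_num)
    linarith
  have claimA : ∀ e : Fin n → ℝ, vlt 0 e → ‖e‖ < ε →
      vlt (ubar + e) (fun _ => 1 / ε) := by
    intro e he hne i
    have h1 : e i ≤ ‖e‖ := by
      have := norm_le_pi_norm e i
      rw [Real.norm_eq_abs] at this
      exact le_trans (le_abs_self _) this
    simp only [Pi.add_apply]
    rw [hinv]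
    have := hMi i
    linarith
  refine ⟨ε, hεpos, claimA, ?_⟩
  intro e he hne v hv
  have hvC : ∀ i, C ≤ v i := by
    intro i
    have := hv i
    rw [hinv] at this
    simp only [] at this
    linarith
  have hvlt1 : vlt (ubar + e) v := fun i => lt_trans (claimA e he hne i) (hv i)
  have hvlt2 : vlt (ubar - e) v := vlt_of_vle_of_vlt (vle_sub_add he) hvlt1
  have hganti : Antitone (gline β C ubar e) := g_anti hmono hb he
  have hglc := g_leftcont hrc hb (ubar := ubar) he
  have hβ1 : β (ubar + e, v) = gline β C ubar e (-1) := by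
    have hr : ubar - (-1 : ℝ) • e = ubar + e := by module
    rw [F_eq hb hvlt1 hvC]
    unfold gline
    rw [hr]
  have hβ2 : β (ubar - e, v) = gline β C ubar e 1 := by
    have hr : ubar - (1 : ℝ) • e = ubar - e := by module
    rw [F_eq hb hvlt2 hvC]
    unfold gline
    rw [hr]
  constructor
  · apply (jumps_finite hganti (-1) 1).subset
    rintro s ⟨h1, h2, h3⟩
    refine ⟨⟨h1, h2⟩, ?_⟩
    intro hEq
    apply h3
    rw [multInf_eq_jump hmono hjump hrc hb he s, hEq]
    ring
  · rw [hβ1, hβ2]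
    rw [finsum_mem_congr rfl
      (fun s _ => multInf_eq_jump hmono hjump hrc hb (ubar := ubar) he s)]
    exact (tele hganti hglc (gline β C ubar e (-1)) (-1) 1 (by norm_num)
      (Nat.le_add_left _ _)).symm
end PersistSpace
end

section
/- Let ε ≥ 0 and let (β_τ)_{τ∈[0,ε]} be a family of admissible and tame functions ℝⁿ×ℝⁿ → ℕ such that β_τ and β_{τ'} are |τ−τ'|-interleaved for all τ, τ' ∈ [0,ε]. Then for every cornerpoint at infinity u of β_0 (i.e. μ∞_{β_0}(u) > 0) there exists a cornerpoint at infinity u' of β_ε (i.e. μ∞_{β_ε}(u') > 0) with ‖u−u'‖∞ ≤ ε. -/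
namespace PersistSpace

variable {n : ℕ}

/-- A canonical big vector dominating `w`, with all coordinates `≥ C`. -/
def Vbig (C : ℝ) (w : Fin n → ℝ) : Fin n → ℝ := fun i => max (w i) C + 1

lemma vlt_Vbig (C : ℝ) (w : Fin n → ℝ) : vlt w (Vbig C w) := by
  intro i
  have := le_max_left (w i) C
  simp only [Vbig]
  linarith

lemma C_le_Vbig (C : ℝ) (w : Fin n → ℝ) (i : Fin n) : C ≤ Vbig C w i := by
  have := le_max_right (w i) C
  simp only [Vbig]
  linarith

/-- The value of `β` "at infinity" in the second variable. -/
def capF (β : (Fin n → ℝ) × (Fin n → ℝ) → ℕ) (C : ℝ) (w : Fin n → ℝ) : ℕ :=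
  β (w, Vbig C w)

lemma capF_spec {β : (Fin n → ℝ) × (Fin n → ℝ) → ℕ} {C : ℝ}
    (hb : ∀ u v v' : Fin n → ℝ, vlt u v → vlt u v' → (∀ i, C ≤ v i) → (∀ i, C ≤ v' i) →
      β (u, v) = β (u, v'))
    {w v : Fin n → ℝ} (hv : vlt w v) (hCv : ∀ i, C ≤ v i) :
    β (w, v) = capF β C w :=
  hb w v (Vbig C w) hv (vlt_Vbig C w) hCv (C_le_Vbig C w)

lemma capF_mono {β : (Fin n → ℝ) × (Fin n → ℝ) → ℕ} {C : ℝ}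
    (hm : Monot β)
    (hb : ∀ u v v' : Fin n → ℝ, vlt u v → vlt u v' → (∀ i, C ≤ v i) → (∀ i, C ≤ v' i) →
      β (u, v) = β (u, v'))
    {w w' : Fin n → ℝ} (h : vle w w') :
    capF β C w ≤ capF β C w' := by
  have h1 : β (w, Vbig C w') = capF β C w :=
    capF_spec hb (fun i => lt_of_le_of_lt (h i) (vlt_Vbig C w' i)) (C_le_Vbig C w')
  calc capF β C w = β (w, Vbig C w') := h1.symm
    _ ≤ β (w', Vbig C w') := hm.1 w w' _ h (vlt_Vbig C w')

lemma capF_rightCont {β : (Fin n → ℝ) × (Fin n → ℝ) → ℕ} {C : ℝ}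
    (hrc : RightCont β)
    (hb : ∀ u v v' : Fin n → ℝ, vlt u v → vlt u v' → (∀ i, C ≤ v i) → (∀ i, C ≤ v' i) →
      β (u, v) = β (u, v'))
    (w : Fin n → ℝ) :
    ∃ δ > (0:ℝ), ∀ w' : Fin n → ℝ, vle w w' → ‖w' - w‖ < δ → capF β C w' = capF β C w := by
  obtain ⟨δ, hδ, h1, -⟩ := hrc w (Vbig C w) (vlt_Vbig C w)
  refine ⟨min δ 1, lt_min hδ one_pos, fun w' hle hn => ?_⟩
  have hwv : vlt w' (Vbig C w) := by
    intro i
    have h2 : w' i - w i ≤ ‖w' - w‖ := by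
      calc w' i - w i ≤ |w' i - w i| := le_abs_self _
        _ = ‖(w' - w) i‖ := by simp [Real.norm_eq_abs]
        _ ≤ ‖w' - w‖ := norm_le_pi_norm _ i
    have h3 := le_max_left (w i) C
    have h4 : ‖w' - w‖ < 1 := lt_of_lt_of_le hn (min_le_right _ _)
    simp only [Vbig]
    linarith
  have h5 : β (w', Vbig C w) = capF β C w' := capF_spec hb hwv (C_le_Vbig C w)
  rw [← h5]
  exact h1 w' hle (lt_of_lt_of_le hn (min_le_left _ _))

/-- Proposition 4.8 (stability of cornerpoints at infinity): for an interpolating family of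
pairwise-interleaved admissible tame functions, every cornerpoint at infinity of `β 0` is
`ε`-close to a cornerpoint at infinity of `β ε`. -/
theorem stability_of_cornerpoints_at_infinity
    (n : ℕ) (hn : 0 < n) (ε : ℝ) (hε : 0 ≤ ε)
    (β : ℝ → (Fin n → ℝ) × (Fin n → ℝ) → ℕ)
    (hadm : ∀ τ ∈ Set.Icc (0:ℝ) ε, Admissible (β τ) ∧ Tame (β τ))
    (hint : ∀ τ ∈ Set.Icc (0:ℝ) ε, ∀ τ' ∈ Set.Icc (0:ℝ) ε,
      Interleaved (β τ) (β τ') |τ - τ'|)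
    (u : Fin n → ℝ) (hcp : 0 < multInf (β 0) u) :
    ∃ u' : Fin n → ℝ, 0 < multInf (β ε) u' ∧ ‖u - u'‖ ≤ ε := by
  obtain ⟨⟨hm0, hj0, hrc0⟩, C0, hC0, hb0, -⟩ := hadm 0 ⟨le_refl 0, hε⟩
  obtain ⟨⟨hmε, hjε, hrcε⟩, Cε, hCε, hbε, -⟩ := hadm ε ⟨hε, le_refl ε⟩
  set C : ℝ := max C0 Cε with hCdef
  have hb0' : ∀ a b b' : Fin n → ℝ, vlt a b → vlt a b' → (∀ i, C ≤ b i) → (∀ i, C ≤ b' i) →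
      β 0 (a, b) = β 0 (a, b') := fun a b b' h1 h2 h3 h4 =>
    hb0 a b b' h1 h2 (fun i => le_trans (le_max_left _ _) (h3 i))
      (fun i => le_trans (le_max_left _ _) (h4 i))
  have hbε' : ∀ a b b' : Fin n → ℝ, vlt a b → vlt a b' → (∀ i, C ≤ b i) → (∀ i, C ≤ b' i) →
      β ε (a, b) = β ε (a, b') := fun a b b' h1 h2 h3 h4 =>
    hbε a b b' h1 h2 (fun i => le_trans (le_max_right _ _) (h3 i))
      (fun i => le_trans (le_max_right _ _) (h4 i))
  -- the single interleaving between β 0 and β ε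
  have hI : Interleaved (β 0) (β ε) ε := by
    have h := hint 0 ⟨le_refl 0, hε⟩ ε ⟨hε, le_refl ε⟩
    rwa [zero_sub, abs_neg, abs_of_nonneg hε] at h
  -- interleaving of the values at infinity
  have hfg : ∀ w : Fin n → ℝ, capF (β 0) C (w - fun _ => ε) ≤ capF (β ε) C w := by
    intro w
    have h := (hI w (Vbig C w) (vlt_Vbig C w)).1
    have e1 : β 0 (w - (fun _ => ε), Vbig C w + (fun _ => ε)) =
        capF (β 0) C (w - fun _ => ε) := by
      apply capF_spec hb0'
      · intro i
        have h3 := le_max_left (w i) C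
        simp only [Pi.sub_apply, Pi.add_apply, Vbig]
        linarith
      · intro i
        have h3 := le_max_right (w i) C
        simp only [Pi.add_apply, Vbig]
        linarith
    rw [e1] at h
    exact h
  have hgf : ∀ w : Fin n → ℝ, capF (β ε) C (w - fun _ => ε) ≤ capF (β 0) C w := by
    intro w
    have h := (hI w (Vbig C w) (vlt_Vbig C w)).2
    have e1 : β ε (w - (fun _ => ε), Vbig C w + (fun _ => ε)) =
        capF (β ε) C (w - fun _ => ε) := by
      apply capF_spec hbε'
      · intro i
        have h3 := le_max_left (w i) C
        simp only [Pi.sub_apply, Pi.add_apply, Vbig]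
        linarith
      · intro i
        have h3 := le_max_right (w i) C
        simp only [Pi.add_apply, Vbig]
        linarith
    rw [e1] at h
    exact h
  -- extract the hypothesis: every μ∞_{e,v}(u) of β 0 is ≥ 1
  have hS0bdd : BddBelow {m : ℤ | ∃ e v : Fin n → ℝ,
      vlt 0 e ∧ vlt (u + e) v ∧ m = muInfE (β 0) e v u} := by
    refine ⟨0, ?_⟩
    rintro m ⟨e, v, he, hv, rfl⟩
    have hle : vle (u - e) (u + e) := by
      intro i
      have h0 := he i
      simp only [Pi.zero_apply] at h0
      simp only [Pi.sub_apply, Pi.add_apply]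
      linarith
    have h1 := hm0.1 (u - e) (u + e) v hle hv
    simp only [muInfE]
    omega
  have hcp' : 0 < sInf {m : ℤ | ∃ e v : Fin n → ℝ,
      vlt 0 e ∧ vlt (u + e) v ∧ m = muInfE (β 0) e v u} := hcp
  have hkey0 : ∀ e v : Fin n → ℝ, vlt 0 e → vlt (u + e) v →
      (β 0 (u - e, v) : ℤ) + 1 ≤ (β 0 (u + e, v) : ℤ) := by
    intro e v he hv
    have hmem : muInfE (β 0) e v u ∈ {m : ℤ | ∃ e v : Fin n → ℝ,
        vlt 0 e ∧ vlt (u + e) v ∧ m = muInfE (β 0) e v u} := ⟨e, v, he, hv, rfl⟩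
    have h1 := csInf_le hS0bdd hmem
    have h2 := lt_of_lt_of_le hcp' h1
    simp only [muInfE] at h2
    omega
  -- the diagonal jump of capF (β 0) at u
  have hjump : ∀ e : Fin n → ℝ, vlt 0 e →
      capF (β 0) C (u - e) + 1 ≤ capF (β 0) C u := by
    intro e he
    obtain ⟨δ, hδ, hrc⟩ := capF_rightCont (C := C) hrc0 hb0' u
    set e' : Fin n → ℝ := fun i => min (e i) (δ/2) with he'def
    have he' : vlt 0 e' := by
      intro i
      have h1 := he i
      simp only [Pi.zero_apply] at h1 ⊢
      exact lt_min h1 (by linarith)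
    have hfe' : capF (β 0) C (u + e') = capF (β 0) C u := by
      apply hrc
      · intro i
        have h1 := he' i
        simp only [Pi.zero_apply] at h1
        simp only [Pi.add_apply]
        linarith
      · have heq : u + e' - u = e' := add_sub_cancel_left u e'
        rw [heq, pi_norm_lt_iff hδ]
        intro i
        have h1 := he' i
        simp only [Pi.zero_apply] at h1
        have h2 : e' i ≤ δ/2 := min_le_right _ _
        rw [Real.norm_eq_abs, abs_of_pos h1]
        linarith
    have h2 := hkey0 e' (Vbig C (u + e')) he' (vlt_Vbig C (u + e'))
    have e1 : β 0 (u + e', Vbig C (u + e')) = capF (β 0) C (u + e') := rfl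
    have e2 : β 0 (u - e', Vbig C (u + e')) = capF (β 0) C (u - e') := by
      apply capF_spec hb0' _ (C_le_Vbig C (u + e'))
      intro i
      have h3 := he' i
      simp only [Pi.zero_apply] at h3
      have h4 := vlt_Vbig C (u + e') i
      simp only [Pi.add_apply] at h4
      simp only [Pi.sub_apply]
      linarith
    rw [e1, e2, hfe'] at h2
    have h3 : capF (β 0) C (u - e) ≤ capF (β 0) C (u - e') := by
      apply capF_mono hm0 hb0'
      intro i
      have h4 : e' i ≤ e i := min_le_left _ _
      simp only [Pi.sub_apply]
      linarith
    omega
  -- the sliding construction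
  set S : Set ℝ := {t : ℝ | capF (β 0) C u ≤ capF (β ε) C (u + fun _ => t)} with hSdef
  have hεS : ε ∈ S := by
    have h := hfg (u + fun _ => ε)
    have e1 : (u + (fun _ => ε)) - (fun _ => ε) = u := add_sub_cancel_right u _
    rw [e1] at h
    exact h
  have hlbS : ∀ t ∈ S, -ε ≤ t := by
    intro t ht
    by_contra hcon
    push_neg at hcon
    have h1 := hgf (u + fun _ => t + ε)
    have e1 : (u + (fun _ => t + ε)) - (fun _ => ε) = u + fun _ => t := by
      funext i
      simp only [Pi.sub_apply, Pi.add_apply]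
      ring
    rw [e1] at h1
    have h2 := hjump (fun _ => -(t + ε)) (fun i => by simp only [Pi.zero_apply]; linarith)
    have e2 : u - (fun _ => -(t + ε)) = u + fun _ => t + ε := by
      funext i
      simp only [Pi.sub_apply, Pi.add_apply]
      ring
    rw [e2] at h2
    have h3 : capF (β 0) C u ≤ capF (β ε) C (u + fun _ => t) := ht
    omega
  have hSbdd : BddBelow S := ⟨-ε, hlbS⟩
  set t0 := sInf S with ht0def
  have ht0ub : t0 ≤ ε := csInf_le hSbdd hεS
  have ht0lb : -ε ≤ t0 := le_csInf ⟨ε, hεS⟩ hlbS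
  set u' : Fin n → ℝ := u + fun _ => t0 with hu'def
  have ht0S : capF (β 0) C u ≤ capF (β ε) C u' := by
    obtain ⟨δ, hδ, hrc⟩ := capF_rightCont (C := C) hrcε hbε' u'
    obtain ⟨t, htS, htlt⟩ := Real.lt_sInf_add_pos ⟨ε, hεS⟩ hδ
    have h1 : t0 ≤ t := csInf_le hSbdd htS
    have h2 : capF (β ε) C (u + fun _ => t) = capF (β ε) C u' := by
      apply hrc
      · intro i
        simp only [hu'def, Pi.add_apply]
        linarith
      · have e1 : (u + fun _ => t) - u' = fun _ => t - t0 := by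
          funext i
          simp only [hu'def, Pi.add_apply, Pi.sub_apply]
          ring
        rw [e1, pi_norm_lt_iff hδ]
        intro i
        rw [Real.norm_eq_abs, abs_of_nonneg (by linarith)]
        have : t < t0 + δ := htlt
        linarith
    have h3 : capF (β 0) C u ≤ capF (β ε) C (u + fun _ => t) := htS
    rw [h2] at h3
    exact h3
  have hlt_t0 : ∀ t : ℝ, t < t0 →
      capF (β ε) C (u + fun _ => t) + 1 ≤ capF (β 0) C u := by
    intro t ht
    by_contra hcon
    push_neg at hcon
    have h1 : t ∈ S := by
      simp only [hSdef, Set.mem_setOf_eq]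
      omega
    exact absurd (csInf_le hSbdd h1) (not_le.mpr ht)
  haveI : Nonempty (Fin n) := ⟨⟨0, hn⟩⟩
  refine ⟨u', ?_, ?_⟩
  · -- u' is a cornerpoint at infinity of β ε
    have hne : {m : ℤ | ∃ e v : Fin n → ℝ,
        vlt 0 e ∧ vlt (u' + e) v ∧ m = muInfE (β ε) e v u'}.Nonempty := by
      refine ⟨muInfE (β ε) (fun _ => 1) (u' + fun _ => 2) u',
        fun _ => 1, u' + fun _ => 2, ?_, ?_, rfl⟩
      · intro i
        simp only [Pi.zero_apply]
        norm_num
      · intro i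
        simp only [Pi.add_apply]
        norm_num
    have hlow : ∀ m ∈ {m : ℤ | ∃ e v : Fin n → ℝ,
        vlt 0 e ∧ vlt (u' + e) v ∧ m = muInfE (β ε) e v u'}, (1:ℤ) ≤ m := by
      rintro m ⟨e, v, he, hv, rfl⟩
      set W : Fin n → ℝ := fun i => max (v i) C with hWdef
      have hvW : vle v W := fun i => le_max_left _ _
      have hW1 : vlt (u' + e) W := fun i => lt_of_lt_of_le (hv i) (hvW i)
      have hCW : ∀ i, C ≤ W i := fun i => le_max_right _ _
      have hue : vle (u' - e) (u' + e) := by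
        intro i
        have h0 := he i
        simp only [Pi.zero_apply] at h0
        simp only [Pi.sub_apply, Pi.add_apply]
        linarith
      have hjm := hjε (u' - e) (u' + e) v W hue hv hvW
      have eg1 : β ε (u' + e, W) = capF (β ε) C (u' + e) := capF_spec hbε' hW1 hCW
      have eg2 : β ε (u' - e, W) = capF (β ε) C (u' - e) :=
        capF_spec hbε' (fun i => lt_of_le_of_lt (hue i) (hW1 i)) hCW
      have hg1 : capF (β ε) C u' ≤ capF (β ε) C (u' + e) := by
        apply capF_mono hmε hbε'
        intro i
        have h0 := he i
        simp only [Pi.zero_apply] at h0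
        simp only [Pi.add_apply]
        linarith
      set m' := Finset.univ.inf' Finset.univ_nonempty e with hm'def
      have hm'pos : 0 < m' := by
        rw [hm'def, Finset.lt_inf'_iff]
        intro i _
        have h0 := he i
        simpa using h0
      have hm'le : ∀ i, m' ≤ e i := fun i => Finset.inf'_le e (Finset.mem_univ i)
      have h6 : capF (β ε) C (u' - e) ≤ capF (β ε) C (u + fun _ => t0 - m') := by
        apply capF_mono hmε hbε'
        intro i
        have h7 := hm'le i
        simp only [hu'def, Pi.sub_apply, Pi.add_apply]
        linarith
      have h5 := hlt_t0 (t0 - m') (by linarith)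
      simp only [muInfE]
      rw [eg1, eg2] at hjm
      omega
    have h7 : (1:ℤ) ≤ sInf {m : ℤ | ∃ e v : Fin n → ℝ,
        vlt 0 e ∧ vlt (u' + e) v ∧ m = muInfE (β ε) e v u'} := le_csInf hne hlow
    exact lt_of_lt_of_le one_pos h7
  · -- ‖u - u'‖ ≤ ε
    have e1 : u - u' = fun _ => -t0 := by
      funext i
      simp only [hu'def, Pi.sub_apply, Pi.add_apply]
      ring
    rw [e1, pi_norm_le_iff_of_nonneg hε]
    intro i
    rw [Real.norm_eq_abs, abs_le]
    constructor <;> linarith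
end PersistSpace
end
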